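/- arXiv:2408.11916 — 4 statements merged into one kernel-verified Lean document; each statement's English description precedes it below -/
import Mathlib

section
/- Define Φ₁ : F₂² × F₂² → F₂ by Φ₁(u,v) = (u₁+v₁)(u₁+v₂), and for u, v ∈ F₂^{2m} written as m-tuples of pairs, define Φ_m(u,v) = Σ_{i=1}^m Φ₁(u(i), v(i)) ∈ F₂. Say u and v are linked if Φ_m(u,v) + Φ_m(v,u) = 1. Then any set U ⊆ F₂^{2m} of pairwise unlinked indices has cardinality at most 2^m. -/
/-- `Φ₁((u₁,u₂),(v₁,v₂)) = (u₁+v₁)(u₁+v₂)` in `F₂`. -/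
def Phi1 (u v : ZMod 2 × ZMod 2) : ZMod 2 := (u.1 + v.1) * (u.1 + v.2)

/-- `Φ_m(u,v) = Σ_{i=1}^m Φ₁(u(i),v(i))`, for `u, v ∈ F₂^{2m} ≅ (F₂²)^m`. -/
def PhiM {m : ℕ} (u v : Fin m → ZMod 2 × ZMod 2) : ZMod 2 := ∑ i, Phi1 (u i) (v i)

/-- `u` and `v` are unlinked if `Φ_m(u,v) + Φ_m(v,u) = 0`. -/
def Unlinked {m : ℕ} (u v : Fin m → ZMod 2 × ZMod 2) : Prop := PhiM u v + PhiM v u = 0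

/-- coordinate quadratic form -/
def Q1 (w : ZMod 2 × ZMod 2) : ZMod 2 := w.1 + w.1 * w.2

/-- coordinate symplectic form -/
def B1 (w w' : ZMod 2 × ZMod 2) : ZMod 2 := w.1 * w'.2 + w.2 * w'.1

lemma phi1_add (u v : ZMod 2 × ZMod 2) : Phi1 u v + Phi1 v u = Q1 (u + v) := by
  revert u v; decide

lemma q1_polar (w w' : ZMod 2 × ZMod 2) : Q1 (w + w') = Q1 w + Q1 w' + B1 w w' := by
  revert w w'; decide

abbrev Vm (m : ℕ) := Fin m → ZMod 2 × ZMod 2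

noncomputable def Bform (m : ℕ) : Vm m →ₗ[ZMod 2] Vm m →ₗ[ZMod 2] ZMod 2 :=
  LinearMap.mk₂ (ZMod 2) (fun u v => ∑ i, B1 (u i) (v i))
    (fun u u' v => by
      rw [← Finset.sum_add_distrib]
      exact Finset.sum_congr rfl fun i _ => by simp [B1]; ring)
    (fun c u v => by
      simp only [smul_eq_mul, Finset.mul_sum]
      exact Finset.sum_congr rfl fun i _ => by
        simp [B1, Prod.smul_fst, Prod.smul_snd, smul_eq_mul]; ring)
    (fun u v v' => by
      rw [← Finset.sum_add_distrib]
      exact Finset.sum_congr rfl fun i _ => by simp [B1]; ring)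
    (fun c u v => by
      simp only [smul_eq_mul, Finset.mul_sum]
      exact Finset.sum_congr rfl fun i _ => by
        simp [B1, Prod.smul_fst, Prod.smul_snd, smul_eq_mul]; ring)

def Qm {m : ℕ} (w : Vm m) : ZMod 2 := ∑ i, Q1 (w i)

lemma bform_apply {m : ℕ} (u v : Vm m) : Bform m u v = ∑ i, B1 (u i) (v i) := rfl

lemma qm_polar {m : ℕ} (w w' : Vm m) : Qm (w + w') = Qm w + Qm w' + Bform m w w' := by
  simp only [Qm, bform_apply, Pi.add_apply, q1_polar, Finset.sum_add_distrib]

lemma unlinked_iff {m : ℕ} (u v : Vm m) : Unlinked u v ↔ Qm (u + v) = 0 := by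
  unfold Unlinked PhiM Qm
  rw [← Finset.sum_add_distrib]
  simp only [phi1_add, Pi.add_apply]

lemma bform_inj (m : ℕ) : Function.Injective (Bform m) := by
  rw [← LinearMap.ker_eq_bot, eq_bot_iff]
  intro w hw
  simp only [LinearMap.mem_ker] at hw
  have h1 : ∀ v : Vm m, ∑ i, B1 (w i) (v i) = 0 := fun v => by
    have := congrArg (fun f => f v) hw
    simpa [bform_apply] using this
  have hcoord : ∀ i, w i = 0 := by
    intro i
    have ha := h1 (Pi.single i ((0 : ZMod 2), (1 : ZMod 2)))
    have hb := h1 (Pi.single i ((1 : ZMod 2), (0 : ZMod 2)))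
    rw [Finset.sum_eq_single i (fun j _ hj => by simp [Pi.single_eq_of_ne hj, B1])
      (fun h => absurd (Finset.mem_univ i) h)] at ha hb
    simp only [Pi.single_eq_same, B1] at ha hb
    have h1' : (w i).1 = 0 := by simpa using ha
    have h2' : (w i).2 = 0 := by simpa using hb
    exact Prod.ext h1' h2'
  exact funext hcoord

/-- any set of pairwise unlinked indices in `F₂^{2m}` has at most `2^m` elements. -/
theorem stmt_5 (m : ℕ) (hm : 1 ≤ m) (U : Finset (Fin m → ZMod 2 × ZMod 2))
    (hU : ∀ u ∈ U, ∀ v ∈ U, Unlinked u v) : U.card ≤ 2 ^ m := by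
  rcases U.eq_empty_or_nonempty with rfl | ⟨u₀, hu₀⟩
  · simp
  classical
  set S : Set (Vm m) := (fun u => u + u₀) '' (U : Set (Vm m)) with hS
  have hQ : ∀ u ∈ U, ∀ v ∈ U, Qm (u + v) = 0 := fun u hu v hv =>
    (unlinked_iff u v).mp (hU u hu v hv)
  have hx2 : ∀ x : ZMod 2 × ZMod 2, x + x = 0 := by decide
  have hSB : ∀ x ∈ S, ∀ y ∈ S, Bform m x y = 0 := by
    rintro _ ⟨u, hu, rfl⟩ _ ⟨v, hv, rfl⟩
    replace hu : u ∈ U := hu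
    replace hv : v ∈ U := hv
    have key : (u + u₀) + (v + u₀) = u + v := by
      funext i
      simp only [Pi.add_apply]
      rw [show (u i + u₀ i) + (v i + u₀ i) = u i + v i + (u₀ i + u₀ i) from by ring,
        hx2, add_zero]
    have h := qm_polar (u + u₀) (v + u₀)
    rw [key, hQ u hu v hv, hQ u hu u₀ hu₀, hQ v hv u₀ hu₀] at h
    simpa using h.symm
  set W : Submodule (ZMod 2) (Vm m) := Submodule.span (ZMod 2) S with hW
  have hWB : ∀ x ∈ W, ∀ y ∈ W, Bform m x y = 0 := by
    intro x hx y hy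
    have step1 : ∀ g ∈ S, Bform m g y = 0 := by
      intro g hg
      have hle : W ≤ LinearMap.ker (Bform m g) := by
        rw [hW, Submodule.span_le]
        intro s hs
        exact hSB g hg s hs
      exact hle hy
    have hle : W ≤ LinearMap.ker ((Bform m).flip y) := by
      rw [hW, Submodule.span_le]
      intro s hs
      simpa [LinearMap.flip_apply] using step1 s hs
    simpa [LinearMap.flip_apply] using hle hx
  have hmap : W.map (Bform m) ≤ W.dualAnnihilator := by
    rintro _ ⟨x, hx, rfl⟩
    rw [Submodule.mem_dualAnnihilator]
    exact fun y hy => hWB x hx y hy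
  have hdim : Module.finrank (ZMod 2) (Vm m) = 2 * m := by
    rw [Module.finrank_pi_fintype]
    simp [Module.finrank_prod]
    ring
  have hrk1 : Module.finrank (ZMod 2) (W.map (Bform m)) = Module.finrank (ZMod 2) W :=
    (LinearEquiv.finrank_eq (Submodule.equivMapOfInjective _ (bform_inj m) W)).symm
  have hrk2 : Module.finrank (ZMod 2) W + Module.finrank (ZMod 2) W.dualAnnihilator
      = 2 * m := by
    have heq := LinearEquiv.finrank_eq (R := ZMod 2) (M := Vm m ⧸ W)
      (N := W.dualAnnihilator) (Subspace.quotEquivAnnihilator W)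
    rw [← heq, add_comm, Submodule.finrank_quotient_add_finrank, hdim]
  have hrk3 : Module.finrank (ZMod 2) W ≤ Module.finrank (ZMod 2) W.dualAnnihilator := by
    rw [← hrk1]
    exact Submodule.finrank_mono hmap
  have hWrank : Module.finrank (ZMod 2) W ≤ m := by omega
  have hcardW : Fintype.card W = 2 ^ Module.finrank (ZMod 2) W := by
    have := Module.card_eq_pow_finrank (K := ZMod 2) (V := W)
    simpa using this
  have hcardW' : Fintype.card W ≤ 2 ^ m := by
    rw [hcardW]; exact Nat.pow_le_pow_right (by norm_num) hWrank
  have hUcard : U.card = (U.image (fun u => u + u₀)).card :=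
    (Finset.card_image_of_injective U (fun a b h => by
      simpa using congrArg (fun x => x + u₀) h)).symm
  calc U.card = (U.image (fun u => u + u₀)).card := hUcard
    _ ≤ (Finset.univ.filter (· ∈ W)).card := by
        apply Finset.card_le_card
        intro x hx
        rcases Finset.mem_image.mp hx with ⟨u, hu, rfl⟩
        exact Finset.mem_filter.mpr ⟨Finset.mem_univ _,
          Submodule.subset_span ⟨u, Finset.mem_coe.mpr hu, rfl⟩⟩
    _ = Fintype.card W := (Fintype.card_subtype _).symm
    _ ≤ 2 ^ m := hcardW'
end

section
/- In a Dedekind domain, if a is a squarefree nonzero ideal written as a = ∏_{i} d_i with pairwise coprime ideals d_i, and the same ideal is also written in m different ways a = ∏_{u} d_u^{(ℓ)} for ℓ = 1,…,m (each into squarefree pairwise coprime factors indexed by u ∈ F₂²), then each factor satisfies d_{u(ℓ)}^{(ℓ)} = ∏ over all choices of indices u(i) ∈ F₂² for i ≠ ℓ of gcd(d_{u(1)}^{(1)}, …, d_{u(m)}^{(m)}). -/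
open Finset

/-- Binary gcd-splitting lemma for ideals in any commutative ring. -/
lemma stmt8_bin {R : Type*} [CommRing R] (x y z : Ideal R) (h : y ⊔ z = ⊤)
    (hx : y * z ≤ x) : x = (x ⊔ y) * (x ⊔ z) := by
  apply le_antisymm
  · calc x = x * (y ⊔ z) := by rw [h, Ideal.mul_top]
      _ = x * y ⊔ x * z := Ideal.mul_sup x y z
      _ ≤ (x ⊔ y) * (x ⊔ z) := by
          apply sup_le
          · rw [mul_comm]
            exact Ideal.mul_mono le_sup_right le_sup_left
          · exact Ideal.mul_mono le_sup_left le_sup_right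
  · calc (x ⊔ y) * (x ⊔ z) = x * (x ⊔ z) ⊔ y * (x ⊔ z) := Ideal.sup_mul x y (x ⊔ z)
      _ = (x * x ⊔ x * z) ⊔ (y * x ⊔ y * z) := by rw [Ideal.mul_sup, Ideal.mul_sup]
      _ ≤ x := by
          apply sup_le <;> apply sup_le
          · exact Ideal.mul_le_right
          · exact Ideal.mul_le_left
          · exact Ideal.mul_le_right
          · exact hx

/-- If pairwise coprime ideals have product dividing `x`, then `x` factors as the
product of the gcds. -/
lemma stmt8_split {R : Type*} [CommRing R] {ι : Type*} [DecidableEq ι] (s : Finset ι)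
    (e : ι → Ideal R) (x : Ideal R)
    (hc : (s : Set ι).Pairwise fun i j => e i ⊔ e j = ⊤)
    (hx : ∏ w ∈ s, e w ≤ x) : x = ∏ w ∈ s, (x ⊔ e w) := by
  induction s using Finset.induction_on generalizing x with
  | empty => simpa using hx
  | @insert v t hvt IH =>
    have hcop : e v ⊔ ∏ w ∈ t, e w = ⊤ := by
      apply Ideal.sup_prod_eq_top
      intro i hi
      exact hc (by simp) (by simp [hi]) (by rintro rfl; exact hvt hi)
    have hx' : e v * ∏ w ∈ t, e w ≤ x := by rwa [Finset.prod_insert hvt] at hx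
    have h1 : x = (x ⊔ e v) * (x ⊔ ∏ w ∈ t, e w) := stmt8_bin x _ _ hcop hx'
    have h2 : (x ⊔ ∏ w ∈ t, e w) = ∏ w ∈ t, ((x ⊔ ∏ w ∈ t, e w) ⊔ e w) :=
      IH _ (hc.mono (Finset.coe_subset.mpr (Finset.subset_insert v t))) le_sup_right
    have h3 : ∀ w ∈ t, ((x ⊔ ∏ w ∈ t, e w) ⊔ e w) = x ⊔ e w := by
      intro w hw
      have : (∏ w ∈ t, e w) ≤ e w := Ideal.le_of_dvd (Finset.dvd_prod_of_mem e hw)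
      rw [sup_assoc, sup_eq_right.mpr this]
    rw [Finset.prod_insert hvt, ← Finset.prod_congr rfl h3, ← h2, ← h1]

lemma stmt8_iSup_succ {α : Type*} [CompleteLattice α] {n : ℕ} (f : Fin (n + 1) → α) :
    (⨆ i, f i) = f 0 ⊔ ⨆ i : Fin n, f i.succ := by
  apply le_antisymm
  · exact iSup_le fun i => Fin.cases le_sup_left
      (fun j => le_sup_of_le_right (le_iSup (fun i : Fin n => f i.succ) j)) i
  · exact sup_le (le_iSup f 0) (iSup_le fun j => le_iSup f j.succ)

/-- Main combinatorial lemma: a common multiple bound splits over all tuples. -/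
lemma stmt8_key {R : Type*} [CommRing R] {U : Type*} [Fintype U] [DecidableEq U] :
    ∀ (n : ℕ) (d : Fin n → U → Ideal R) (x : Ideal R),
      (∀ i u v, u ≠ v → d i u ⊔ d i v = ⊤) →
      (∀ i, (∏ u, d i u) ≤ x) →
      x = ∏ c : Fin n → U, (x ⊔ ⨆ i, d i (c i))
  | 0, d, x, _, _ => by
      haveI : Unique (Fin 0 → U) := ⟨⟨Fin.elim0⟩, fun f => funext fun i => i.elim0⟩
      rw [Fintype.prod_unique]
      simp
  | (n + 1), d, x, hcop, hdiv => by
      have step1 : x = ∏ u : U, (x ⊔ d 0 u) := by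
        apply stmt8_split Finset.univ (d 0) x
        · intro u hu v hv huv
          exact hcop 0 u v huv
        · exact hdiv 0
      have step2 : ∀ u : U, (x ⊔ d 0 u) =
          ∏ c : Fin n → U, ((x ⊔ d 0 u) ⊔ ⨆ i : Fin n, d i.succ (c i)) := by
        intro u
        apply stmt8_key n (fun i => d i.succ) (x ⊔ d 0 u)
        · intro i u' v' h; exact hcop i.succ u' v' h
        · intro i; exact le_trans (hdiv i.succ) le_sup_left
      calc x = ∏ u : U, (x ⊔ d 0 u) := step1
        _ = ∏ u : U, ∏ c : Fin n → U, ((x ⊔ d 0 u) ⊔ ⨆ i : Fin n, d i.succ (c i)) :=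
            Finset.prod_congr rfl fun u _ => step2 u
        _ = ∏ p : U × (Fin n → U), (x ⊔ ⨆ i, d i ((Fin.cons p.1 p.2 : Fin (n+1) → U) i)) := by
            rw [Fintype.prod_prod_type]
            refine Finset.prod_congr rfl fun u _ => Finset.prod_congr rfl fun c _ => ?_
            rw [stmt8_iSup_succ (fun i => d i ((Fin.cons u c : Fin (n+1) → U) i))]
            simp [sup_assoc]
        _ = ∏ c : Fin (n + 1) → U, (x ⊔ ⨆ i, d i (c i)) := by
            apply Fintype.prod_equiv (Fin.consEquiv fun _ => U)
            intro p
            rfl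

/-- if a squarefree nonzero ideal `a` of a Dedekind domain is written in `m`
ways as a product of pairwise coprime ideals indexed by `F₂²`, then each factor
`d^{(ℓ)}_{u₀}` is the product, over all choices of indices `c` with `c(ℓ) = u₀`,
of the gcds `gcd(d^{(1)}_{c(1)}, …, d^{(m)}_{c(m)})` (gcd of ideals being their sum). -/
theorem stmt_8 {R : Type*} [CommRing R] [IsDedekindDomain R]
    (m : ℕ) (hm : 1 ≤ m) (a : Ideal R) (ha : a ≠ ⊥) (hsq : Squarefree a)
    (d : Fin m → (ZMod 2 × ZMod 2) → Ideal R)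
    (hprod : ∀ ℓ : Fin m, a = ∏ u : ZMod 2 × ZMod 2, d ℓ u)
    (hcop : ∀ ℓ : Fin m, ∀ u v : ZMod 2 × ZMod 2, u ≠ v → d ℓ u ⊔ d ℓ v = ⊤)
    (ℓ : Fin m) (u₀ : ZMod 2 × ZMod 2) :
    d ℓ u₀ = ∏ c ∈ Finset.univ.filter (fun c : Fin m → ZMod 2 × ZMod 2 => c ℓ = u₀),
      ⨆ i : Fin m, d i (c i) := by
  have hale : ∀ i u, a ≤ d i u := fun i u =>
    Ideal.le_of_dvd (by rw [hprod i]; exact Finset.dvd_prod_of_mem _ (Finset.mem_univ u))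
  have haleg : ∀ c : Fin m → ZMod 2 × ZMod 2, a ≤ ⨆ i : Fin m, d i (c i) := fun c =>
    le_trans (hale ℓ (c ℓ)) (le_iSup (fun i => d i (c i)) ℓ)
  -- the full product of gcds is `a`
  have hfull : a = ∏ c : Fin m → ZMod 2 × ZMod 2, ⨆ i : Fin m, d i (c i) := by
    have h := stmt8_key m d a hcop (fun i => (hprod i).ge)
    rw [h]
    exact Finset.prod_congr rfl fun c _ => sup_eq_right.mpr (haleg c)
  have hfiber : ∏ u : ZMod 2 × ZMod 2,
      ∏ c ∈ Finset.univ.filter (fun c : Fin m → ZMod 2 × ZMod 2 => c ℓ = u),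
        (⨆ i : Fin m, d i (c i)) = ∏ u : ZMod 2 × ZMod 2, d ℓ u := by
    rw [Finset.prod_fiberwise Finset.univ (fun c : Fin m → ZMod 2 × ZMod 2 => c ℓ)
      (fun c => ⨆ i : Fin m, d i (c i)), ← hfull, hprod ℓ]
  -- each fiber product divides d ℓ u
  have hBdvd : ∀ u : ZMod 2 × ZMod 2,
      (∏ c ∈ Finset.univ.filter (fun c : Fin m → ZMod 2 × ZMod 2 => c ℓ = u),
        ⨆ i : Fin m, d i (c i)) ∣ d ℓ u := by
    intro u
    apply Finset.prod_dvd_of_coprime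
    · intro c hc c' hc' hne
      simp only [Function.onFun]
      rw [Ideal.isCoprime_iff_sup_eq]
      obtain ⟨i, hi⟩ : ∃ i, c i ≠ c' i := by
        by_contra h
        push_neg at h
        exact hne (funext h)
      rw [eq_top_iff, ← hcop i (c i) (c' i) hi]
      exact sup_le_sup (le_iSup (fun j => d j (c j)) i) (le_iSup (fun j => d j (c' j)) i)
    · intro c hc
      rw [Finset.mem_filter] at hc
      rw [Ideal.dvd_iff_le, ← hc.2]
      exact le_iSup (fun i => d i (c i)) ℓ
  -- nonvanishing of fiber products
  have hBne : ∀ u : ZMod 2 × ZMod 2,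
      (∏ c ∈ Finset.univ.filter (fun c : Fin m → ZMod 2 × ZMod 2 => c ℓ = u),
        ⨆ i : Fin m, d i (c i)) ≠ 0 := by
    intro u
    rw [Finset.prod_ne_zero_iff]
    intro c _ h0
    have hb := haleg c
    rw [h0] at hb
    exact ha (le_bot_iff.mp hb)
  -- conclude
  choose e he using hBdvd
  have hprodB : (∏ u : ZMod 2 × ZMod 2,
      ∏ c ∈ Finset.univ.filter (fun c : Fin m → ZMod 2 × ZMod 2 => c ℓ = u),
        ⨆ i : Fin m, d i (c i)) ≠ 0 := Finset.prod_ne_zero_iff.mpr fun u _ => hBne u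
  have hstep : ∏ u : ZMod 2 × ZMod 2,
      ((∏ c ∈ Finset.univ.filter (fun c : Fin m → ZMod 2 × ZMod 2 => c ℓ = u),
        ⨆ i : Fin m, d i (c i)) * e u) = (∏ u : ZMod 2 × ZMod 2,
      ∏ c ∈ Finset.univ.filter (fun c : Fin m → ZMod 2 × ZMod 2 => c ℓ = u),
        ⨆ i : Fin m, d i (c i)) * 1 := by
    rw [mul_one, hfiber]
    exact Finset.prod_congr rfl fun u _ => (he u).symm
  rw [Finset.prod_mul_distrib] at hstep
  have heone : ∏ u : ZMod 2 × ZMod 2, e u = 1 := mul_left_cancel₀ hprodB hstep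
  have hu : IsUnit (e u₀) :=
    isUnit_of_dvd_one (heone ▸ Finset.dvd_prod_of_mem e (Finset.mem_univ u₀))
  rw [Ideal.isUnit_iff] at hu
  rw [he u₀, hu, Ideal.mul_top]
end

section
/- Let K be a number field. For every integer g ≥ 2, Σ_{N(a) ≤ x} τ_{K,g}(a) = α_K^{g} · x (log x)^{g−1}/(g−1)! + O_K(x (log x)^{g−2}) as x → ∞, where α_K is the constant in the ideal-counting asymptotic Σ_{N(a) ≤ x} 1 = α_K x + O(x^{1 − 1/n_K}). -/
open NumberField Finset intervalIntegral

set_option maxHeartbeats 1000000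
set_option synthInstance.maxHeartbeats 400000
set_option linter.unusedSectionVars false
set_option linter.unusedVariables false
set_option linter.deprecated false
set_option linter.unusedTactic false

namespace Stmt11Proof

section PureReal


lemma log_gap {n : ℕ} (hn : 2 ≤ n) : 1/(n:ℝ) ≤ Real.log n - Real.log ((n:ℝ)-1) := by
  have h1 : (1:ℝ) ≤ (n:ℝ) - 1 := by
    have : (2:ℝ) ≤ (n:ℝ) := by exact_mod_cast hn
    linarith
  have hn0 : (0:ℝ) < n := by linarith
  have hd : Real.log (((n:ℝ)-1)/n) ≤ ((n:ℝ)-1)/n - 1 :=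
    Real.log_le_sub_one_of_pos (by positivity)
  rw [Real.log_div (by linarith) (ne_of_gt hn0)] at hd
  have : ((n:ℝ)-1)/n - 1 = -(1/n) := by field_simp; ring
  rw [this] at hd
  linarith

lemma neg_log_ratio {n : ℕ} (hn : 2 ≤ n) : 1/(n:ℝ) ≤ -Real.log (((n:ℝ)-1)/n) := by
  have h1 : (1:ℝ) ≤ (n:ℝ) - 1 := by
    have : (2:ℝ) ≤ (n:ℝ) := by exact_mod_cast hn
    linarith
  have hn0 : (0:ℝ) < n := by linarith
  rw [Real.log_div (by linarith) (ne_of_gt hn0)]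
  have := log_gap hn
  linarith

-- pointwise bound for zeta tail
lemma zeta_pointwise {δ : ℝ} (hδ : 0 < δ) {n : ℕ} (hn : 2 ≤ n) :
    (n:ℝ) ^ (-(1+δ)) ≤ (1/δ) * (((n:ℝ)-1) ^ (-δ) - (n:ℝ) ^ (-δ)) := by
  have h1 : (1:ℝ) ≤ (n:ℝ) - 1 := by
    have : (2:ℝ) ≤ (n:ℝ) := by exact_mod_cast hn
    linarith
  have hn0 : (0:ℝ) < n := by linarith
  have hr0 : (0:ℝ) < ((n:ℝ)-1)/n := by positivity
  -- (n-1)^(-δ) = n^(-δ) * ((n-1)/n)^(-δ)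
  have key : ((n:ℝ)-1) ^ (-δ) = (n:ℝ) ^ (-δ) * (((n:ℝ)-1)/n) ^ (-δ) := by
    rw [← Real.mul_rpow (le_of_lt hn0) (le_of_lt hr0)]
    congr 1
    field_simp
  have hexp : (((n:ℝ)-1)/n) ^ (-δ) ≥ 1 + δ/n := by
    rw [Real.rpow_def_of_pos hr0, mul_comm]
    have h2 : -δ * Real.log (((n:ℝ)-1)/n) ≥ δ/n := by
      have := neg_log_ratio hn
      have h3 : δ * (1/n) ≤ δ * (-Real.log (((n:ℝ)-1)/n)) :=
        mul_le_mul_of_nonneg_left this (le_of_lt hδ)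
      calc δ/n = δ * (1/n) := by ring
        _ ≤ δ * (-Real.log (((n:ℝ)-1)/n)) := h3
        _ = -δ * Real.log (((n:ℝ)-1)/n) := by ring
    calc 1 + δ/n ≤ 1 + (-δ * Real.log (((n:ℝ)-1)/n)) := by linarith
      _ ≤ Real.exp (-δ * Real.log (((n:ℝ)-1)/n)) := by
          have := Real.add_one_le_exp (-δ * Real.log (((n:ℝ)-1)/n)); linarith
  have hnpos : (0:ℝ) < (n:ℝ) ^ (-δ) := Real.rpow_pos_of_pos hn0 _
  have step : ((n:ℝ)-1) ^ (-δ) - (n:ℝ) ^ (-δ) ≥ (n:ℝ) ^ (-δ) * (δ/n) := by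
    rw [key]
    have := mul_le_mul_of_nonneg_left hexp (le_of_lt hnpos)
    nlinarith
  have hsplit : (n:ℝ) ^ (-(1+δ)) = (n:ℝ) ^ (-δ) * (1/n) := by
    rw [show -(1+δ) = -δ + (-1) by ring, Real.rpow_add hn0, Real.rpow_neg_one]
    ring
  rw [hsplit]
  rw [ge_iff_le, ← sub_nonneg] at step
  have hδ' : (0:ℝ) < 1/δ := by positivity
  rw [ge_iff_le] at hexp
  have : (n:ℝ) ^ (-δ) * (δ/n) ≤ ((n:ℝ)-1) ^ (-δ) - (n:ℝ) ^ (-δ) := by linarith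
  calc (n:ℝ) ^ (-δ) * (1/n) = (1/δ) * ((n:ℝ) ^ (-δ) * (δ/n)) := by
        field_simp
    _ ≤ (1/δ) * (((n:ℝ)-1) ^ (-δ) - (n:ℝ) ^ (-δ)) := by
        apply mul_le_mul_of_nonneg_left this (le_of_lt hδ')

lemma zeta_bound {δ : ℝ} (hδ : 0 < δ) (N : ℕ) :
    ∑ n ∈ Icc 1 N, (n:ℝ) ^ (-(1+δ)) ≤ 1 + 1/δ := by
  rcases Nat.lt_or_ge N 1 with h | h
  · interval_cases N
    · simp; positivity
  · have main : ∀ M : ℕ, 1 ≤ M →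
        ∑ n ∈ Icc 1 M, (n:ℝ) ^ (-(1+δ)) ≤ 1 + (1/δ) * (1 - (M:ℝ) ^ (-δ)) := by
      intro M hM
      induction M, hM using Nat.le_induction with
      | base => simp [Real.one_rpow]
      | succ M hM ih =>
        rw [Finset.sum_Icc_succ_top (by omega)]
        have hp := zeta_pointwise hδ (show 2 ≤ M + 1 by omega)
        have : ((M:ℝ)+1) - 1 = (M:ℝ) := by ring
        push_cast at hp ⊢
        rw [this] at hp
        calc ∑ n ∈ Icc 1 M, (n:ℝ) ^ (-(1+δ)) + ((M:ℝ)+1) ^ (-(1+δ))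
            ≤ (1 + (1/δ) * (1 - (M:ℝ) ^ (-δ))) + (1/δ) * ((M:ℝ)^(-δ) - ((M:ℝ)+1)^(-δ)) := by
              push_cast at ih
              linarith
          _ = 1 + (1/δ) * (1 - ((M:ℝ)+1) ^ (-δ)) := by ring
    have := main N h
    have hpos : (0:ℝ) ≤ (N:ℝ) ^ (-δ) := Real.rpow_nonneg (by positivity) _
    have hδ' : (0:ℝ) < 1/δ := by positivity
    nlinarith

-- pointwise bound for power sum
lemma powsum_pointwise {δ : ℝ} (hδ : 0 < δ) (hδ1 : δ ≤ 1) {n : ℕ} (hn : 2 ≤ n) :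
    (n:ℝ) ^ (δ-1) ≤ (2/δ) * ((n:ℝ) ^ δ - ((n:ℝ)-1) ^ δ) := by
  have h1 : (1:ℝ) ≤ (n:ℝ) - 1 := by
    have : (2:ℝ) ≤ (n:ℝ) := by exact_mod_cast hn
    linarith
  have hn0 : (0:ℝ) < n := by linarith
  have hr0 : (0:ℝ) < ((n:ℝ)-1)/n := by positivity
  have key : ((n:ℝ)-1) ^ δ = (n:ℝ) ^ δ * (((n:ℝ)-1)/n) ^ δ := by
    rw [← Real.mul_rpow (le_of_lt hn0) (le_of_lt hr0)]
    congr 1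
    field_simp
  set u : ℝ := δ/n with hu
  have hu0 : 0 < u := by positivity
  have hu1 : u ≤ 1 := by
    rw [hu]
    rw [div_le_one hn0]
    calc δ ≤ 1 := hδ1
      _ ≤ (n:ℝ) := by exact_mod_cast Nat.one_le_of_lt hn
  -- ((n-1)/n)^δ ≤ exp(-u) ≤ 1/(1+u)
  have hlogr : Real.log (((n:ℝ)-1)/n) ≤ -(1/n) := by
    have := neg_log_ratio hn
    linarith
  have hbd : (((n:ℝ)-1)/n) ^ δ ≤ Real.exp (-u) := by
    rw [Real.rpow_def_of_pos hr0, mul_comm]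
    apply Real.exp_le_exp.mpr
    calc δ * Real.log (((n:ℝ)-1)/n) ≤ δ * (-(1/n)) :=
          mul_le_mul_of_nonneg_left hlogr (le_of_lt hδ)
      _ = -u := by rw [hu]; ring
  have hexpinv : Real.exp (-u) ≤ 1/(1+u) := by
    rw [Real.exp_neg, ← one_div]
    have hex : 1 + u ≤ Real.exp u := by
      have := Real.add_one_le_exp u; linarith
    apply one_div_le_one_div_of_le (by linarith) hex
  have hfrac : 1/(1+u) ≤ 1 - u/2 := by
    rw [div_le_iff₀ (by linarith : (0:ℝ) < 1+u)]
    nlinarith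
  have hrδ : (((n:ℝ)-1)/n) ^ δ ≤ 1 - u/2 := le_trans hbd (le_trans hexpinv hfrac)
  have hnd : (0:ℝ) < (n:ℝ) ^ δ := Real.rpow_pos_of_pos hn0 _
  have step : (n:ℝ) ^ δ - ((n:ℝ)-1) ^ δ ≥ (n:ℝ) ^ δ * (u/2) := by
    rw [key]
    nlinarith
  have hsplit : (n:ℝ) ^ (δ-1) = (n:ℝ) ^ δ * (1/n) := by
    rw [show δ-1 = δ + (-1) by ring, Real.rpow_add hn0, Real.rpow_neg_one]
    ring
  rw [hsplit]
  have : (n:ℝ) ^ δ * (1/n) = (2/δ) * ((n:ℝ) ^ δ * (u/2)) := by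
    rw [hu]; field_simp
  rw [this]
  apply mul_le_mul_of_nonneg_left step (by positivity)

lemma powsum_bound {δ : ℝ} (hδ : 0 < δ) (hδ1 : δ ≤ 1) {N : ℕ} (hN : 1 ≤ N) :
    ∑ n ∈ Icc 1 N, (n:ℝ) ^ (δ-1) ≤ (1 + 2/δ) * (N:ℝ) ^ δ := by
  have main : ∑ n ∈ Icc 1 N, (n:ℝ) ^ (δ-1) ≤ 1 + (2/δ) * ((N:ℝ) ^ δ - 1) := by
    induction N, hN using Nat.le_induction with
    | base => simp [Real.one_rpow]
    | succ M hM ih =>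
      rw [Finset.sum_Icc_succ_top (by omega)]
      have hp := powsum_pointwise hδ hδ1 (show 2 ≤ M + 1 by omega)
      have he : ((M:ℝ)+1) - 1 = (M:ℝ) := by ring
      push_cast at hp ih ⊢
      rw [he] at hp
      linarith
  have h1 : (1:ℝ) ≤ (N:ℝ) ^ δ := by
    apply Real.one_le_rpow (by exact_mod_cast hN) (le_of_lt hδ)
  have h2 : (0:ℝ) < 2/δ := by positivity
  nlinarith

lemma harmonic_bound {N : ℕ} (hN : 1 ≤ N) :
    ∑ n ∈ Icc 1 N, 1/(n:ℝ) ≤ 1 + Real.log N := by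
  induction N, hN using Nat.le_induction with
  | base => simp
  | succ M hM ih =>
    rw [Finset.sum_Icc_succ_top (by omega)]
    have hg := log_gap (show 2 ≤ M + 1 by omega)
    push_cast at hg ih ⊢
    have he : (M:ℝ) + 1 - 1 = (M:ℝ) := by ring
    rw [he] at hg
    have hmono : Real.log (M:ℝ) ≤ Real.log ((M:ℝ)+1) := by
      apply Real.log_le_log (by exact_mod_cast hM)
      linarith
    linarith



lemma incr_bound {δ : ℝ} (hδ : 0 < δ) (hδ1 : δ ≤ 1) {n : ℕ} (hn : 2 ≤ n) :
    (n:ℝ) ^ (1-δ) - ((n:ℝ)-1) ^ (1-δ) ≤ 2 * (n:ℝ) ^ (-δ) := by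
  set t : ℝ := (n:ℝ) with ht
  have h2 : (2:ℝ) ≤ t := by rw [ht]; exact_mod_cast hn
  set a : ℝ := t - 1 with ha
  have ha1 : (1:ℝ) ≤ a := by simp [ha]; linarith
  have ha0 : (0:ℝ) < a := by linarith
  have ht0 : (0:ℝ) < t := by linarith
  have hta : (1:ℝ) ≤ t/a := by rw [le_div_iff₀ ha0]; linarith
  have key : t ^ (1-δ) ≤ a ^ (-δ) * t := by
    have hfac : t = a * (t/a) := by field_simp
    have h1 : t ^ (1-δ) = a ^ (1-δ) * (t/a) ^ (1-δ) := by
      nth_rewrite 1 [hfac]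
      exact Real.mul_rpow (le_of_lt ha0) (by positivity)
    have h2' : (t/a) ^ (1-δ) ≤ t/a := by
      calc (t/a) ^ (1-δ) ≤ (t/a) ^ (1:ℝ) :=
            Real.rpow_le_rpow_of_exponent_le hta (by linarith)
        _ = t/a := Real.rpow_one _
    have h3 : a ^ (1-δ) = a * a ^ (-δ) := by
      rw [show (1:ℝ)-δ = 1 + (-δ) by ring, Real.rpow_add ha0, Real.rpow_one]
    calc t ^ (1-δ) = a ^ (1-δ) * (t/a) ^ (1-δ) := h1
      _ ≤ a ^ (1-δ) * (t/a) := by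
          apply mul_le_mul_of_nonneg_left h2' (by positivity)
      _ = a ^ (-δ) * t := by rw [h3]; field_simp
  have key2 : a ^ (-δ) ≤ 2 * t ^ (-δ) := by
    have hat : t/2 ≤ a := by linarith
    have h1 : a ^ (-δ) ≤ (t/2) ^ (-δ) :=
      Real.rpow_le_rpow_of_nonpos (by linarith) hat (by linarith)
    have h2' : (t/2) ^ (-δ) = (2:ℝ) ^ δ * t ^ (-δ) := by
      rw [Real.div_rpow (le_of_lt ht0) (by norm_num : (0:ℝ) ≤ 2),
        Real.rpow_neg (by norm_num : (0:ℝ) ≤ 2), div_inv_eq_mul]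
      ring
    have h3 : (2:ℝ) ^ δ ≤ 2 := by
      calc (2:ℝ) ^ δ ≤ (2:ℝ) ^ (1:ℝ) := Real.rpow_le_rpow_of_exponent_le (by norm_num) hδ1
        _ = 2 := Real.rpow_one 2
    have ht' : (0:ℝ) ≤ t ^ (-δ) := Real.rpow_nonneg (le_of_lt ht0) _
    calc a ^ (-δ) ≤ (2:ℝ) ^ δ * t ^ (-δ) := by rw [← h2']; exact h1
      _ ≤ 2 * t ^ (-δ) := mul_le_mul_of_nonneg_right h3 ht'
  have hgoal : t ^ (1-δ) - a ^ (1-δ) ≤ a ^ (-δ) := by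
    have h3 : a ^ (1-δ) = a * a ^ (-δ) := by
      rw [show (1:ℝ)-δ = 1 + (-δ) by ring, Real.rpow_add ha0, Real.rpow_one]
    have := key
    rw [h3]
    nlinarith [Real.rpow_nonneg (le_of_lt ha0) (-δ)]
  linarith

-- FTC integral
lemma log_integral {x : ℝ} (hx : 1 ≤ x) (k : ℕ) :
    ∫ t in (1:ℝ)..x, (Real.log (x/t))^k / t = (Real.log x)^(k+1)/(k+1) := by
  have hx0 : (0:ℝ) < x := by linarith
  have hcont : ContinuousOn (fun t : ℝ => (Real.log (x/t))^k / t) (Set.uIcc 1 x) := by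
    have huIcc : Set.uIcc (1:ℝ) x = Set.Icc 1 x := Set.uIcc_of_le hx
    rw [huIcc]
    apply ContinuousOn.div
    · apply ContinuousOn.pow
      apply ContinuousOn.log
      · apply ContinuousOn.div continuousOn_const continuousOn_id
        intro t ht; exact ne_of_gt (lt_of_lt_of_le zero_lt_one ht.1)
      · intro t ht
        have := ht.1
        positivity
    · exact continuousOn_id
    · intro t ht; exact ne_of_gt (lt_of_lt_of_le zero_lt_one ht.1)
  have hderiv : ∀ t ∈ Set.uIcc (1:ℝ) x,
      HasDerivAt (fun t : ℝ => -(Real.log x - Real.log t)^(k+1)/(k+1))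
        ((Real.log (x/t))^k / t) t := by
    intro t ht
    rw [Set.uIcc_of_le hx] at ht
    have ht0 : (0:ℝ) < t := lt_of_lt_of_le zero_lt_one ht.1
    have hu : HasDerivAt (fun t : ℝ => Real.log x - Real.log t) (-(1/t)) t := by
      simpa using (Real.hasDerivAt_log (ne_of_gt ht0)).const_sub (Real.log x)
    have hpow : HasDerivAt (fun t : ℝ => (Real.log x - Real.log t)^(k+1))
        ((k+1 : ℕ) * (Real.log x - Real.log t)^k * (-(1/t))) t := by
      simpa using hu.fun_pow (k+1)
    have := (hpow.fun_neg).div_const ((k:ℝ)+1)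
    convert this using 1
    · rfl
    · rfl
    rw [Real.log_div (ne_of_gt hx0) (ne_of_gt ht0)]
    push_cast
    field_simp
  rw [integral_eq_sub_of_hasDerivAt hderiv (hcont.intervalIntegrable)]
  rw [Real.log_one]
  have : Real.log x - Real.log x = 0 := by ring
  rw [this]
  simp [zero_pow]
  ring


lemma Fcont {x : ℝ} (hx : 1 ≤ x) (k : ℕ) :
    ContinuousOn (fun t : ℝ => (Real.log (x/t))^k / t) (Set.Icc 1 x) := by
  apply ContinuousOn.div
  · apply ContinuousOn.pow
    apply ContinuousOn.log
    · apply ContinuousOn.div continuousOn_const continuousOn_id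
      intro t ht; exact ne_of_gt (lt_of_lt_of_le zero_lt_one ht.1)
    · intro t ht
      have h1 := ht.1
      have : (0:ℝ) < x := by linarith
      positivity
  · exact continuousOn_id
  · intro t ht; exact ne_of_gt (lt_of_lt_of_le zero_lt_one ht.1)

lemma Fanti {x : ℝ} (hx : 1 ≤ x) (k : ℕ) :
    AntitoneOn (fun t : ℝ => (Real.log (x/t))^k / t) (Set.Icc 1 x) := by
  intro s hs t ht hst
  have hs1 : (1:ℝ) ≤ s := hs.1
  have hs0 : (0:ℝ) < s := by linarith
  have ht0 : (0:ℝ) < t := by linarith [hs1, hst]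
  have hxt : (1:ℝ) ≤ x/t := by rw [le_div_iff₀ ht0]; simpa using ht.2
  have hlt : (0:ℝ) ≤ Real.log (x/t) := Real.log_nonneg hxt
  have hmono : Real.log (x/t) ≤ Real.log (x/s) := by
    apply Real.log_le_log (by positivity)
    apply div_le_div_of_nonneg_left (by linarith) hs0 hst
  have hpow : (Real.log (x/t))^k ≤ (Real.log (x/s))^k :=
    pow_le_pow_left₀ hlt hmono k
  have h0 : (0:ℝ) ≤ (Real.log (x/t))^k := pow_nonneg hlt k
  exact div_le_div₀ (le_trans h0 hpow) hpow hs0 hst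

lemma Fnonneg {x : ℝ} (hx : 1 ≤ x) (k : ℕ) {t : ℝ} (h1 : 1 ≤ t) (h2 : t ≤ x) :
    0 ≤ (Real.log (x/t))^k / t := by
  have ht0 : (0:ℝ) < t := by linarith
  have hxt : (1:ℝ) ≤ x/t := by rw [le_div_iff₀ ht0]; simpa using h2
  have := Real.log_nonneg hxt
  positivity

lemma FN_le {x : ℝ} (hx : 1 ≤ x) (k : ℕ) {t : ℝ} (h1 : 1 ≤ t) (h2 : t ≤ x) :
    (Real.log (x/t))^k / t ≤ (Real.log x)^k := by
  have ht0 : (0:ℝ) < t := by linarith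
  have hxt : (1:ℝ) ≤ x/t := by rw [le_div_iff₀ ht0]; simpa using h2
  have hlt : (0:ℝ) ≤ Real.log (x/t) := Real.log_nonneg hxt
  have hmono : Real.log (x/t) ≤ Real.log x := by
    apply Real.log_le_log (by positivity)
    calc x/t ≤ x/1 := div_le_div_of_nonneg_left (by linarith) zero_lt_one h1
      _ = x := div_one x
  calc (Real.log (x/t))^k / t ≤ (Real.log (x/t))^k / 1 := by
        apply div_le_div_of_nonneg_left (by positivity) zero_lt_one h1
    _ = (Real.log (x/t))^k := div_one _
    _ ≤ (Real.log x)^k := pow_le_pow_left₀ hlt hmono k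

lemma sum_log_div {x : ℝ} (hx : 1 ≤ x) (k : ℕ) :
    |∑ n ∈ Icc 1 ⌊x⌋₊, (Real.log (x/(n:ℝ)))^k / n - (Real.log x)^(k+1)/(k+1)|
      ≤ (Real.log x)^k := by
  set F : ℝ → ℝ := fun t => (Real.log (x/t))^k / t with hF
  set N := ⌊x⌋₊ with hNdef
  have hN : 1 ≤ N := Nat.le_floor (by simpa using hx)
  have hNx : (N:ℝ) ≤ x := Nat.floor_le (by linarith)
  have hN1 : (1:ℝ) ≤ (N:ℝ) := by exact_mod_cast hN
  have hxN1 : x ≤ (N:ℝ) + 1 := le_of_lt (Nat.lt_floor_add_one x)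
  have hsub : Set.Icc (1:ℝ) (N:ℝ) ⊆ Set.Icc 1 x := Set.Icc_subset_Icc le_rfl hNx
  have hanti : AntitoneOn F (Set.Icc (1:ℝ) (N:ℝ)) := (Fanti hx k).mono hsub
  -- cast form needed by mathlib lemmas : Icc (↑1) ↑N
  have hanti' : AntitoneOn F (Set.Icc ((1:ℕ):ℝ) ((N:ℕ):ℝ)) := by exact_mod_cast hanti
  have hint : IntervalIntegrable F MeasureTheory.volume 1 x := by
    have := (Fcont hx k)
    rw [hF]
    apply ContinuousOn.intervalIntegrable
    rwa [Set.uIcc_of_le hx]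
  have hint1N : IntervalIntegrable F MeasureTheory.volume 1 (N:ℝ) :=
    hint.mono_set (by rw [Set.uIcc_of_le hx, Set.uIcc_of_le hN1]; exact hsub)
  have hintNx : IntervalIntegrable F MeasureTheory.volume (N:ℝ) x :=
    hint.mono_set (by
      rw [Set.uIcc_of_le hx, Set.uIcc_of_le hNx]
      exact Set.Icc_subset_Icc hN1 le_rfl)
  have hlogn : (0:ℝ) ≤ (Real.log x)^k := pow_nonneg (Real.log_nonneg hx) k
  have htail_le : ∫ t in (N:ℝ)..x, F t ≤ (Real.log x)^k := by
    have hconst : IntervalIntegrable (fun _ : ℝ => (Real.log x)^k)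
        MeasureTheory.volume (N:ℝ) x := intervalIntegrable_const
    have hmono : ∫ t in (N:ℝ)..x, F t ≤ ∫ _t in (N:ℝ)..x, (Real.log x)^k := by
      apply integral_mono_on hNx hintNx hconst
      intro t ht
      exact FN_le hx k (le_trans hN1 ht.1) ht.2
    have hc : ∫ _t in (N:ℝ)..x, (Real.log x)^k = (x - N) * (Real.log x)^k := by
      simp [intervalIntegral.integral_const, smul_eq_mul]
    have hxn : x - (N:ℝ) ≤ 1 := by linarith
    rw [hc] at hmono
    nlinarith
  have htail_ge : 0 ≤ ∫ t in (N:ℝ)..x, F t := by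
    apply intervalIntegral.integral_nonneg hNx
    intro t ht
    exact Fnonneg hx k (le_trans hN1 ht.1) ht.2
  have hsplitI : (∫ t in (1:ℝ)..(N:ℝ), F t) + ∫ t in (N:ℝ)..x, F t
      = ∫ t in (1:ℝ)..x, F t := integral_add_adjacent_intervals hint1N hintNx
  have hI : ∫ t in (1:ℝ)..x, F t = (Real.log x)^(k+1)/(k+1) := log_integral hx k
  -- shift identity
  have sum_shift : ∀ (G : ℕ → ℝ), ∑ n ∈ Icc 1 N, G n = G 1 + ∑ n ∈ Ico 1 N, G (n+1) := by
    intro G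
    have key : ∀ M : ℕ, 1 ≤ M → ∑ n ∈ Icc 1 M, G n = G 1 + ∑ n ∈ Ico 1 M, G (n+1) := by
      intro M hM
      induction M, hM using Nat.le_induction with
      | base => simp
      | succ M hM ih =>
        rw [Finset.sum_Icc_succ_top (by omega), ih, Finset.sum_Ico_succ_top (by omega)]
        ring
    exact key N hN
  have hF1 : F 1 = (Real.log x)^k := by
    simp [hF]
  -- upper bound
  have hupper : ∑ n ∈ Icc 1 N, F n ≤ F 1 + ∫ t in (1:ℝ)..(N:ℝ), F t := by
    rw [sum_shift (fun n => F n)]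
    have hle := hanti'.sum_le_integral_Ico hN
    push_cast at hle ⊢
    linarith
  -- lower bound
  have hlower : (∫ t in (1:ℝ)..(N:ℝ), F t) ≤ ∑ n ∈ Icc 1 N, F n := by
    have hge := hanti'.integral_le_sum_Ico hN
    push_cast at hge
    have hsub2 : ∑ n ∈ Ico 1 N, F n ≤ ∑ n ∈ Icc 1 N, F n := by
      apply Finset.sum_le_sum_of_subset_of_nonneg
      · intro m hm
        rw [Finset.mem_Ico] at hm; rw [Finset.mem_Icc]; omega
      · intro m hm _
        rw [Finset.mem_Icc] at hm
        apply Fnonneg hx k (by exact_mod_cast hm.1)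
        calc (m:ℝ) ≤ (N:ℝ) := by exact_mod_cast hm.2
          _ ≤ x := hNx
    linarith
  rw [abs_le]
  constructor
  · have : (∫ t in (1:ℝ)..x, F t) - (Real.log x)^k ≤ ∑ n ∈ Icc 1 N, F n := by
      rw [← hsplitI]; linarith
    rw [hI] at this
    linarith
  · have : ∑ n ∈ Icc 1 N, F n ≤ (Real.log x)^k + ∫ t in (1:ℝ)..x, F t := by
      rw [← hsplitI, hF1] at *
      linarith
    rw [hI] at this
    linarith


end PureReal

section NF
variable {K : Type*} [Field K] [NumberField K]


variable {K : Type*} [Field K] [NumberField K]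

lemma finite_setIdeals (x : ℝ) :
    {I : Ideal (𝓞 K) | I ≠ ⊥ ∧ (Ideal.absNorm I : ℝ) ≤ x}.Finite := by
  apply (Ideal.finite_setOf_absNorm_le ⌊x⌋₊).subset
  rintro I ⟨-, hI⟩
  exact Nat.le_floor hI

noncomputable def Fx (K : Type*) [Field K] [NumberField K] (x : ℝ) : Finset (Ideal (𝓞 K)) :=
  (finite_setIdeals x).toFinset

lemma mem_Fx {x : ℝ} {I : Ideal (𝓞 K)} :
    I ∈ Fx K x ↔ I ≠ ⊥ ∧ (Ideal.absNorm I : ℝ) ≤ x := by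
  simp [Fx]

abbrev TSet (K : Type*) [Field K] [NumberField K] (g : ℕ) (x : ℝ) :=
  {b : Fin g → Ideal (𝓞 K) //
      ∏ i, b i ≠ ⊥ ∧ (Ideal.absNorm (∏ i, b i) : ℝ) ≤ x}

lemma norm_prod (g : ℕ) (b : Fin g → Ideal (𝓞 K)) :
    Ideal.absNorm (∏ i, b i) = ∏ i, Ideal.absNorm (b i) := map_prod _ _ _

lemma comp_le {g : ℕ} {x : ℝ} (b : TSet K g x) (i : Fin g) :
    b.1 i ≠ ⊥ ∧ (Ideal.absNorm (b.1 i) : ℝ) ≤ max x 1 := by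
  obtain ⟨hb, hx⟩ := b.2
  have h0 : ∀ j, Ideal.absNorm (b.1 j) ≠ 0 := by
    intro j hj
    apply hb
    have hbj : b.1 j = 0 := by
      rw [Ideal.zero_eq_bot]; exact Ideal.absNorm_eq_zero_iff.mp hj
    have hz := Finset.prod_eq_zero (Finset.mem_univ j) hbj
    rwa [Ideal.zero_eq_bot] at hz
  refine ⟨fun h => h0 i (by simp [h]), ?_⟩
  have h1 : Ideal.absNorm (b.1 i) ≤ Ideal.absNorm (∏ j, b.1 j) := by
    rw [norm_prod]
    exact Finset.single_le_prod' (fun j _ => Nat.one_le_iff_ne_zero.mpr (h0 j)) (Finset.mem_univ i)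
  calc (Ideal.absNorm (b.1 i) : ℝ) ≤ (Ideal.absNorm (∏ j, b.1 j) : ℝ) := by exact_mod_cast h1
    _ ≤ x := hx
    _ ≤ max x 1 := le_max_left _ _

instance TSet.finite (g : ℕ) (x : ℝ) : Finite (TSet K g x) := by
  have : Finite (Fin g → ↥(Fx K (max x 1))) := by infer_instance
  apply Finite.of_injective
    (fun b : TSet K g x => fun i => (⟨b.1 i, mem_Fx.mpr (comp_le b i)⟩ : ↥(Fx K (max x 1))))
  intro b c h
  apply Subtype.ext
  funext i
  exact congrArg Subtype.val (congrFun h i)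

noncomputable def Tcard (K : Type*) [Field K] [NumberField K] (g : ℕ) (x : ℝ) : ℕ :=
  Nat.card (TSet K g x)

noncomputable def Acard (K : Type*) [Field K] [NumberField K] (x : ℝ) : ℕ :=
  Nat.card {a : Ideal (𝓞 K) // a ≠ ⊥ ∧ (Ideal.absNorm a : ℝ) ≤ x}

lemma Acard_eq_card_Fx (x : ℝ) : Acard K x = (Fx K x).card := by
  rw [Acard, ← Nat.card_eq_finsetCard]
  exact Nat.card_congr (Equiv.subtypeEquivRight (fun I => by simp [mem_Fx]))

lemma Tcard_one (x : ℝ) : Tcard K 1 x = Acard K x := by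
  refine Nat.card_congr ⟨fun b => ⟨b.1 0, by simpa using b.2⟩,
    fun a => ⟨fun _ => a.1, by simpa using a.2⟩, fun b => ?_, fun a => rfl⟩
  apply Subtype.ext; funext i
  have : i = 0 := Subsingleton.elim _ _
  rw [this]

lemma nat_card_sigma {ι : Type*} [Fintype ι] (f : ι → Type*) [∀ i, Finite (f i)] :
    Nat.card ((i : ι) × f i) = ∑ i, Nat.card (f i) := by
  classical
  have := fun i => Fintype.ofFinite (f i)
  simp [Nat.card_eq_fintype_card]

lemma norm_pos_real {I : Ideal (𝓞 K)} (h : I ≠ ⊥) : (1:ℝ) ≤ (Ideal.absNorm I : ℝ) := by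
  have : Ideal.absNorm I ≠ 0 := fun h0 => h (Ideal.absNorm_eq_zero_iff.mp h0)
  exact_mod_cast Nat.one_le_iff_ne_zero.mpr this

lemma cons_prod (g : ℕ) (a : Ideal (𝓞 K)) (c : Fin g → Ideal (𝓞 K)) :
    (∏ i, Fin.cons a c i) = a * ∏ i, c i := by
  rw [Fin.prod_univ_succ]
  simp

lemma cond_iff {g : ℕ} {x : ℝ} (a : Ideal (𝓞 K)) (c : Fin g → Ideal (𝓞 K)) :
    ((∏ i, (Fin.cons a c : Fin (g+1) → Ideal (𝓞 K)) i) ≠ ⊥ ∧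
      (Ideal.absNorm (∏ i, (Fin.cons a c : Fin (g+1) → Ideal (𝓞 K)) i) : ℝ) ≤ x)
      ↔ ((a ≠ ⊥ ∧ (Ideal.absNorm a : ℝ) ≤ x) ∧
          ((∏ i, c i) ≠ ⊥ ∧
            (Ideal.absNorm (∏ i, c i) : ℝ) ≤ x / (Ideal.absNorm a : ℝ))) := by
  rw [cons_prod]
  have hmul : (Ideal.absNorm (a * ∏ i, c i) : ℝ)
      = (Ideal.absNorm a : ℝ) * (Ideal.absNorm (∏ i, c i) : ℝ) := by
    rw [_root_.map_mul Ideal.absNorm]; push_cast; ring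
  constructor
  · rintro ⟨hne, hle⟩
    have ha : a ≠ ⊥ := fun h => hne (by rw [h, ← Ideal.zero_eq_bot, zero_mul])
    have hc : (∏ i, c i) ≠ ⊥ := fun h => hne (by rw [h, ← Ideal.zero_eq_bot, mul_zero])
    have ha1 := norm_pos_real ha
    have hc1 := norm_pos_real hc
    have hax : (Ideal.absNorm a : ℝ) ≤ x := by
      calc (Ideal.absNorm a : ℝ) ≤ (Ideal.absNorm a : ℝ) * (Ideal.absNorm (∏ i, c i) : ℝ) :=
            le_mul_of_one_le_right (by linarith) hc1
        _ ≤ x := by rw [← hmul]; exact hle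
    refine ⟨⟨ha, hax⟩, hc, ?_⟩
    rw [le_div_iff₀' (by linarith : (0:ℝ) < (Ideal.absNorm a : ℝ))]
    rw [← hmul]; exact hle
  · rintro ⟨⟨ha, hax⟩, hc, hcx⟩
    have ha1 := norm_pos_real ha
    refine ⟨?_, ?_⟩
    · intro h
      rw [← Ideal.zero_eq_bot, mul_eq_zero] at h
      rcases h with h | h
      · exact ha (by rwa [Ideal.zero_eq_bot] at h)
      · exact hc (by rwa [Ideal.zero_eq_bot] at h)
    · rw [hmul]
      rw [le_div_iff₀' (by linarith : (0:ℝ) < (Ideal.absNorm a : ℝ))] at hcx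
      exact hcx

noncomputable def splitEquiv (g : ℕ) (x : ℝ) :
    TSet K (g+1) x ≃ (a : ↥(Fx K x)) × TSet K g (x / (Ideal.absNorm (a : Ideal (𝓞 K)) : ℝ)) where
  toFun b := ⟨⟨b.1 0, by
      have h := (cond_iff (b.1 0) (Fin.tail b.1)).mp (by rw [Fin.cons_self_tail]; exact b.2)
      exact mem_Fx.mpr h.1⟩,
    ⟨Fin.tail b.1, ((cond_iff (b.1 0) (Fin.tail b.1)).mp
      (by rw [Fin.cons_self_tail]; exact b.2)).2⟩⟩
  invFun p := ⟨Fin.cons p.1.1 p.2.1, (cond_iff p.1.1 p.2.1).mpr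
    ⟨mem_Fx.mp p.1.2, p.2.2⟩⟩
  left_inv b := Subtype.ext (Fin.cons_self_tail b.1)
  right_inv p := by
    rcases p with ⟨⟨a, ha⟩, ⟨c, hc⟩⟩
    rfl

lemma Tcard_succ (g : ℕ) (x : ℝ) :
    Tcard K (g+1) x = ∑ a ∈ Fx K x, Tcard K g (x / (Ideal.absNorm a : ℝ)) := by
  rw [Tcard, Nat.card_congr (splitEquiv g x), nat_card_sigma]
  rw [← Finset.sum_coe_sort (Fx K x) (fun a => Tcard K g (x / (Ideal.absNorm a : ℝ)))]
  rfl

-- grouping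
noncomputable def idl (K : Type*) [Field K] [NumberField K] (n : ℕ) : ℕ :=
  Nat.card {I : Ideal (𝓞 K) // Ideal.absNorm I = n}

lemma maps_to_Icc {x : ℝ} : ∀ a ∈ Fx K x, Ideal.absNorm a ∈ Icc 1 ⌊x⌋₊ := by
  intro a ha
  obtain ⟨h1, h2⟩ := mem_Fx.mp ha
  refine mem_Icc.mpr ⟨?_, Nat.le_floor h2⟩
  exact Nat.one_le_iff_ne_zero.mpr (fun h0 => h1 (Ideal.absNorm_eq_zero_iff.mp h0))

lemma card_filter_norm {x : ℝ} (hx : 0 ≤ x) {n : ℕ} (hn : n ∈ Icc 1 ⌊x⌋₊) :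
    ((Fx K x).filter (fun a => Ideal.absNorm a = n)).card = idl K n := by
  classical
  have hfin := Ideal.finite_setOf_absNorm_eq (S := 𝓞 K) n
  have heq : (Fx K x).filter (fun a => Ideal.absNorm a = n) = hfin.toFinset := by
    ext I
    simp only [mem_filter, Set.Finite.mem_toFinset, Set.mem_setOf_eq, mem_Fx]
    constructor
    · rintro ⟨_, h⟩; exact h
    · intro h
      obtain ⟨h1, h2⟩ := mem_Icc.mp hn
      refine ⟨⟨?_, ?_⟩, h⟩
      · intro hbot; rw [hbot, Ideal.absNorm_bot] at h; omega
      · rw [h]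
        calc ((n:ℝ)) ≤ (⌊x⌋₊ : ℝ) := by exact_mod_cast h2
          _ ≤ x := Nat.floor_le hx
  rw [heq, ← Nat.card_eq_finsetCard]
  exact (Nat.card_congr (Equiv.subtypeEquivRight (fun I => by simp))).symm

lemma sum_Fx (f : ℕ → ℝ) {x : ℝ} (hx : 0 ≤ x) :
    ∑ a ∈ Fx K x, f (Ideal.absNorm a) = ∑ n ∈ Icc 1 ⌊x⌋₊, (idl K n : ℝ) * f n := by
  classical
  rw [← Finset.sum_fiberwise_of_maps_to (g := fun a => Ideal.absNorm a)
    maps_to_Icc (fun a => f (Ideal.absNorm a))]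
  refine Finset.sum_congr rfl (fun n hn => ?_)
  have : ∀ a ∈ (Fx K x).filter (fun a => Ideal.absNorm a = n),
      f (Ideal.absNorm a) = f n := by
    intro a ha; rw [(Finset.mem_filter.mp ha).2]
  rw [Finset.sum_congr rfl this, Finset.sum_const, card_filter_norm hx hn,
    nsmul_eq_mul]

noncomputable def AIcc (K : Type*) [Field K] [NumberField K] (n : ℕ) : ℕ :=
  ∑ m ∈ Icc 1 n, idl K m

lemma Acard_floor {x : ℝ} (hx : 0 ≤ x) : Acard K x = AIcc K ⌊x⌋₊ := by
  classical
  rw [Acard_eq_card_Fx, Finset.card_eq_sum_card_fiberwise maps_to_Icc, AIcc]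
  exact Finset.sum_congr rfl (fun n hn => card_filter_norm hx hn)

-- Abel identity
lemma abel_identity (c f : ℕ → ℝ) {N : ℕ} (hN : 1 ≤ N) :
    ∑ n ∈ Icc 1 N, c n * f n
      = ∑ n ∈ Icc 1 (N-1), (∑ m ∈ Icc 1 n, c m) * (f n - f (n+1))
        + (∑ m ∈ Icc 1 N, c m) * f N := by
  induction N, hN using Nat.le_induction with
  | base => simp
  | succ N hN ih =>
    obtain ⟨M, rfl⟩ : ∃ M, N = M + 1 := ⟨N - 1, by omega⟩
    have e1 : M + 1 + 1 - 1 = M + 1 := rfl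
    have e2 : M + 1 - 1 = M := rfl
    rw [e1]
    rw [e2] at ih
    rw [Finset.sum_Icc_succ_top (by omega) (fun n => c n * f n), ih,
      Finset.sum_Icc_succ_top (by omega)
        (fun n => (∑ m ∈ Icc 1 n, c m) * (f n - f (n+1))),
      Finset.sum_Icc_succ_top (by omega : 1 ≤ M + 1 + 1) c]
    ring



-- cast of AIcc
lemma AIcc_cast (n : ℕ) : ((AIcc K n : ℝ)) = ∑ m ∈ Icc 1 n, (idl K m : ℝ) := by
  rw [AIcc]; push_cast; rfl

-- telescoping function
noncomputable def gfun (δ : ℝ) (n : ℕ) : ℝ := if n = 0 then 0 else (n:ℝ) ^ (1-δ)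

lemma gfun_tel (δ : ℝ) (n : ℕ) :
    ∑ m ∈ Icc 1 n, (gfun δ m - gfun δ (m-1)) = gfun δ n := by
  induction n with
  | zero => simp [gfun]
  | succ M ih =>
    rw [Finset.sum_Icc_succ_top (by omega), ih]
    simp

lemma gfun_incr {δ : ℝ} (hδ : 0 < δ) (hδ1 : δ ≤ 1) {n : ℕ} (hn : 1 ≤ n) :
    gfun δ n - gfun δ (n-1) ≤ 2 * (n:ℝ) ^ (-δ) := by
  rcases Nat.lt_or_ge n 2 with h | h
  · interval_cases n
    have h1 : gfun δ 1 - gfun δ 0 = 1 := by simp [gfun, Real.one_rpow]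
    rw [h1]
    have h2 : ((1:ℕ):ℝ) ^ (-δ) = 1 := by rw [Nat.cast_one, Real.one_rpow]
    rw [h2]; norm_num
  · have hcast : ((n-1 : ℕ):ℝ) = (n:ℝ) - 1 := by
      have : 1 ≤ n := hn; push_cast [this]; ring
    rw [gfun, gfun, if_neg (by omega), if_neg (by omega), hcast]
    exact incr_bound hδ hδ1 h

lemma e_bound {K : Type*} [Field K] [NumberField K] {αK C₁ δ : ℝ}
    (hA : ∀ n : ℕ, 1 ≤ n → |(AIcc K n : ℝ) - αK * n| ≤ C₁ * (n:ℝ) ^ (1-δ))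
    {n : ℕ} (hn : 1 ≤ n) :
    |(AIcc K n : ℝ) - αK * n| ≤ C₁ * gfun δ n := by
  rw [gfun, if_neg (by omega)]
  exact hA n hn

lemma abel_err {K : Type*} [Field K] [NumberField K] {αK C₁ δ : ℝ}
    (hδ : 0 < δ) (hδ1 : δ ≤ 1) (hC₁ : 0 ≤ C₁)
    (hA : ∀ n : ℕ, 1 ≤ n → |(AIcc K n : ℝ) - αK * n| ≤ C₁ * (n:ℝ) ^ (1-δ))
    (f : ℕ → ℝ) {N : ℕ} (hN : 1 ≤ N)
    (hf0 : ∀ n, 1 ≤ n → n ≤ N → 0 ≤ f n)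
    (hfa : ∀ n, 1 ≤ n → n + 1 ≤ N → f (n+1) ≤ f n) :
    |∑ n ∈ Icc 1 N, (idl K n : ℝ) * f n - αK * ∑ n ∈ Icc 1 N, f n|
      ≤ 2 * C₁ * ∑ n ∈ Icc 1 N, (n:ℝ) ^ (-δ) * f n := by
  have hid := abel_identity (fun n => (idl K n : ℝ)) f hN
  have hone := abel_identity (fun _ => (1:ℝ)) f hN
  have hSone : ∀ n : ℕ, (∑ m ∈ Icc 1 n, (1:ℝ)) = (n:ℝ) := by
    intro n; rw [Finset.sum_const, Nat.card_Icc]; simp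
  have hSid : ∀ n : ℕ, (∑ m ∈ Icc 1 n, (idl K m : ℝ)) = (AIcc K n : ℝ) := by
    intro n; rw [AIcc_cast]
  simp only [hSone, one_mul] at hone
  simp only [hSid] at hid
  have key : ∑ n ∈ Icc 1 N, (idl K n : ℝ) * f n - αK * ∑ n ∈ Icc 1 N, f n
      = ∑ n ∈ Icc 1 (N-1), ((AIcc K n : ℝ) - αK * n) * (f n - f (n+1))
        + ((AIcc K N : ℝ) - αK * N) * f N := by
    rw [hid, hone, mul_add]
    have hsplit4 : ∀ X Y U V : ℝ, X + Y - (U + V) = (X - U) + (Y - V) := by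
      intros; ring
    rw [hsplit4]
    congr 1
    · rw [Finset.mul_sum, ← Finset.sum_sub_distrib]
      apply Finset.sum_congr rfl; intro n hn; ring
    · ring
  rw [key]
  -- bound by C₁ * (∑ gfun Δf + gfun N f N)
  have habs : |∑ n ∈ Icc 1 (N-1), ((AIcc K n : ℝ) - αK * n) * (f n - f (n+1))
        + ((AIcc K N : ℝ) - αK * N) * f N|
      ≤ ∑ n ∈ Icc 1 (N-1), C₁ * gfun δ n * (f n - f (n+1)) + C₁ * gfun δ N * f N := by
    apply le_trans (abs_add_le _ _)
    apply add_le_add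
    · apply le_trans (Finset.abs_sum_le_sum_abs _ _)
      apply Finset.sum_le_sum
      intro n hn
      rw [Finset.mem_Icc] at hn
      rw [abs_mul]
      apply mul_le_mul (e_bound hA hn.1)
      · rw [abs_of_nonneg (by
          have := hfa n hn.1 (by omega); linarith)]
      · exact abs_nonneg _
      · exact mul_nonneg hC₁ (by
          rw [gfun, if_neg (by omega)]
          exact Real.rpow_nonneg (by positivity) _)
    · rw [abs_mul]
      apply mul_le_mul (e_bound hA hN)
      · rw [abs_of_nonneg (hf0 N hN le_rfl)]
      · exact abs_nonneg _
      · exact mul_nonneg hC₁ (by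
          rw [gfun, if_neg (by omega)]
          exact Real.rpow_nonneg (by positivity) _)
  apply le_trans habs
  -- reverse abel with c = Δ gfun
  have hrev := abel_identity (fun n => gfun δ n - gfun δ (n-1)) f hN
  have hSg : ∀ n : ℕ, (∑ m ∈ Icc 1 n, (gfun δ m - gfun δ (m-1))) = gfun δ n := gfun_tel δ
  simp only [hSg] at hrev
  have heq : ∑ n ∈ Icc 1 (N-1), C₁ * gfun δ n * (f n - f (n+1)) + C₁ * gfun δ N * f N
      = C₁ * ∑ n ∈ Icc 1 N, (gfun δ n - gfun δ (n-1)) * f n := by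
    rw [hrev, mul_add, Finset.mul_sum]
    congr 1
    · apply Finset.sum_congr rfl; intro n hn; ring
    · ring
  rw [heq]
  rw [show 2 * C₁ * ∑ n ∈ Icc 1 N, (n:ℝ) ^ (-δ) * f n
      = C₁ * ∑ n ∈ Icc 1 N, 2 * ((n:ℝ) ^ (-δ) * f n) by rw [← Finset.mul_sum]; ring]
  apply mul_le_mul_of_nonneg_left _ hC₁
  apply Finset.sum_le_sum
  intro n hn
  rw [Finset.mem_Icc] at hn
  have h1 := gfun_incr hδ hδ1 hn.1
  have h2 := hf0 n hn.1 hn.2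
  nlinarith [Real.rpow_nonneg (show (0:ℝ) ≤ (n:ℝ) by positivity) (-δ)]

lemma abel_bound {K : Type*} [Field K] [NumberField K] {αK C₁ δ : ℝ}
    (hδ : 0 < δ) (hδ1 : δ ≤ 1) (hC₁ : 0 ≤ C₁) (hαK : 0 < αK)
    (hA : ∀ n : ℕ, 1 ≤ n → |(AIcc K n : ℝ) - αK * n| ≤ C₁ * (n:ℝ) ^ (1-δ))
    (f : ℕ → ℝ) {N : ℕ} (hN : 1 ≤ N)
    (hf0 : ∀ n, 1 ≤ n → n ≤ N → 0 ≤ f n)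
    (hfa : ∀ n, 1 ≤ n → n + 1 ≤ N → f (n+1) ≤ f n) :
    ∑ n ∈ Icc 1 N, (idl K n : ℝ) * f n ≤ (αK + C₁) * ∑ n ∈ Icc 1 N, f n := by
  have hid := abel_identity (fun n => (idl K n : ℝ)) f hN
  have hone := abel_identity (fun _ => (1:ℝ)) f hN
  have hSone : ∀ n : ℕ, (∑ m ∈ Icc 1 n, (1:ℝ)) = (n:ℝ) := by
    intro n; rw [Finset.sum_const, Nat.card_Icc]; simp
  have hSid : ∀ n : ℕ, (∑ m ∈ Icc 1 n, (idl K m : ℝ)) = (AIcc K n : ℝ) := by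
    intro n; rw [AIcc_cast]
  simp only [hSone, one_mul] at hone
  simp only [hSid] at hid
  have hAle : ∀ n : ℕ, 1 ≤ n → (AIcc K n : ℝ) ≤ (αK + C₁) * n := by
    intro n hn
    have h1 := hA n hn
    have h2 : (n:ℝ) ^ (1-δ) ≤ (n:ℝ) := by
      calc (n:ℝ) ^ (1-δ) ≤ (n:ℝ) ^ (1:ℝ) :=
            Real.rpow_le_rpow_of_exponent_le (by exact_mod_cast hn) (by linarith)
        _ = (n:ℝ) := Real.rpow_one _
    have h3 : (AIcc K n : ℝ) - αK * n ≤ C₁ * (n:ℝ) ^ (1-δ) := (abs_le.mp h1).2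
    have h4 : C₁ * (n:ℝ) ^ (1-δ) ≤ C₁ * n := mul_le_mul_of_nonneg_left h2 hC₁
    nlinarith
  rw [hid, hone, mul_add, Finset.mul_sum]
  apply add_le_add
  · apply Finset.sum_le_sum
    intro n hn
    rw [Finset.mem_Icc] at hn
    have hdf : 0 ≤ f n - f (n+1) := by
      have := hfa n hn.1 (by omega); linarith
    have := hAle n hn.1
    have hAnn : (0:ℝ) ≤ (AIcc K n : ℝ) := by positivity
    nlinarith
  · have hfN := hf0 N hN le_rfl
    have := hAle N hN
    have hAnn : (0:ℝ) ≤ (AIcc K N : ℝ) := by positivity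
    nlinarith

lemma Lk {K : Type*} [Field K] [NumberField K] {αK C₁ δ : ℝ}
    (hδ : 0 < δ) (hδ1 : δ ≤ 1) (hC₁ : 0 ≤ C₁) (hαK : 0 < αK)
    (hA : ∀ n : ℕ, 1 ≤ n → |(AIcc K n : ℝ) - αK * n| ≤ C₁ * (n:ℝ) ^ (1-δ))
    (k : ℕ) {x : ℝ} (hx : 1 ≤ x) :
    |∑ a ∈ Fx K x, (Real.log (x / (Ideal.absNorm a : ℝ)))^k / (Ideal.absNorm a : ℝ)
        - αK * ((Real.log x)^(k+1)/(k+1))|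
      ≤ (2*C₁*(1+1/δ) + αK) * (1 + Real.log x)^k := by
  have hx0 : (0:ℝ) < x := by linarith
  set N := ⌊x⌋₊ with hNdef
  have hN : 1 ≤ N := Nat.le_floor (by exact_mod_cast hx)
  have hNx : (N:ℝ) ≤ x := Nat.floor_le (by linarith)
  set f : ℕ → ℝ := fun n => (Real.log (x/(n:ℝ)))^k / (n:ℝ) with hf
  have hgroup : ∑ a ∈ Fx K x,
      (Real.log (x / (Ideal.absNorm a : ℝ)))^k / (Ideal.absNorm a : ℝ)
      = ∑ n ∈ Icc 1 N, (idl K n : ℝ) * f n := sum_Fx f (by linarith)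
  have hf0 : ∀ n, 1 ≤ n → n ≤ N → 0 ≤ f n := by
    intro n h1 h2
    apply Fnonneg hx k (by exact_mod_cast h1)
    calc (n:ℝ) ≤ (N:ℝ) := by exact_mod_cast h2
      _ ≤ x := hNx
  have hfa : ∀ n, 1 ≤ n → n + 1 ≤ N → f (n+1) ≤ f n := by
    intro n h1 h2
    have hn1 : (1:ℝ) ≤ (n:ℝ) := by exact_mod_cast h1
    have hn2 : ((n:ℝ)+1) ≤ x := by
      calc ((n:ℝ)+1) ≤ (N:ℝ) := by exact_mod_cast h2
        _ ≤ x := hNx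
    have := Fanti hx k (Set.mem_Icc.mpr ⟨hn1, by linarith⟩)
      (Set.mem_Icc.mpr ⟨by linarith, hn2⟩) (by linarith : (n:ℝ) ≤ (n:ℝ)+1)
    rw [hf]
    simpa using this
  have herr := abel_err hδ hδ1 hC₁ hA f hN hf0 hfa
  have hlogx : (0:ℝ) ≤ Real.log x := Real.log_nonneg hx
  have hlogk : (0:ℝ) ≤ (Real.log x)^k := by positivity
  have hzeta : ∑ n ∈ Icc 1 N, (n:ℝ) ^ (-δ) * f n ≤ (1 + 1/δ) * (Real.log x)^k := by
    have hpt : ∀ n ∈ Icc 1 N, (n:ℝ) ^ (-δ) * f n ≤ (Real.log x)^k * (n:ℝ) ^ (-(1+δ)) := by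
      intro n hn
      rw [Finset.mem_Icc] at hn
      have hn0 : (0:ℝ) < (n:ℝ) := by exact_mod_cast hn.1
      have hnx : (n:ℝ) ≤ x := by
        calc (n:ℝ) ≤ (N:ℝ) := by exact_mod_cast hn.2
          _ ≤ x := hNx
      have hfle : f n ≤ (Real.log x)^k / (n:ℝ) := by
        rw [hf]
        have h1 : (Real.log (x/(n:ℝ)))^k ≤ (Real.log x)^k := by
          have hxt : (1:ℝ) ≤ x/(n:ℝ) := by rw [le_div_iff₀ hn0]; simpa using hnx
          apply pow_le_pow_left₀ (Real.log_nonneg hxt)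
          apply Real.log_le_log (by positivity)
          calc x/(n:ℝ) ≤ x/1 := by
                apply div_le_div_of_nonneg_left (by linarith) zero_lt_one
                exact_mod_cast hn.1
            _ = x := div_one x
        exact div_le_div_of_nonneg_right h1 (le_of_lt hn0)
      have hrw : (n:ℝ) ^ (-δ) / (n:ℝ) = (n:ℝ) ^ (-(1+δ)) := by
        rw [show -(1+δ) = -δ + (-1) by ring, Real.rpow_add hn0, Real.rpow_neg_one]
        ring
      have hr0 : (0:ℝ) ≤ (n:ℝ) ^ (-δ) := Real.rpow_nonneg (le_of_lt hn0) _
      calc (n:ℝ) ^ (-δ) * f n ≤ (n:ℝ) ^ (-δ) * ((Real.log x)^k / (n:ℝ)) :=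
            mul_le_mul_of_nonneg_left hfle hr0
        _ = (Real.log x)^k * ((n:ℝ) ^ (-δ) / (n:ℝ)) := by ring
        _ = (Real.log x)^k * (n:ℝ) ^ (-(1+δ)) := by rw [hrw]
    calc ∑ n ∈ Icc 1 N, (n:ℝ) ^ (-δ) * f n
        ≤ ∑ n ∈ Icc 1 N, (Real.log x)^k * (n:ℝ) ^ (-(1+δ)) := Finset.sum_le_sum hpt
      _ = (Real.log x)^k * ∑ n ∈ Icc 1 N, (n:ℝ) ^ (-(1+δ)) := by rw [Finset.mul_sum]
      _ ≤ (Real.log x)^k * (1 + 1/δ) := by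
          apply mul_le_mul_of_nonneg_left (zeta_bound hδ N) hlogk
      _ = (1 + 1/δ) * (Real.log x)^k := by ring
  have hsum := sum_log_div hx k
  rw [hgroup]
  have htri : |∑ n ∈ Icc 1 N, (idl K n : ℝ) * f n - αK * ((Real.log x)^(k+1)/(k+1))|
      ≤ |∑ n ∈ Icc 1 N, (idl K n : ℝ) * f n - αK * ∑ n ∈ Icc 1 N, f n|
        + αK * |∑ n ∈ Icc 1 N, f n - (Real.log x)^(k+1)/(k+1)| := by
    have h1 : ∑ n ∈ Icc 1 N, (idl K n : ℝ) * f n - αK * ((Real.log x)^(k+1)/(k+1))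
        = (∑ n ∈ Icc 1 N, (idl K n : ℝ) * f n - αK * ∑ n ∈ Icc 1 N, f n)
          + αK * (∑ n ∈ Icc 1 N, f n - (Real.log x)^(k+1)/(k+1)) := by ring
    rw [h1]
    apply le_trans (abs_add_le _ _)
    rw [abs_mul, abs_of_pos hαK]
  apply le_trans htri
  have hpow : (Real.log x)^k ≤ (1 + Real.log x)^k :=
    pow_le_pow_left₀ hlogx (by linarith) k
  have h2C : (0:ℝ) ≤ 2*C₁*(1+1/δ) := by positivity
  calc |∑ n ∈ Icc 1 N, (idl K n : ℝ) * f n - αK * ∑ n ∈ Icc 1 N, f n|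
        + αK * |∑ n ∈ Icc 1 N, f n - (Real.log x)^(k+1)/(k+1)|
      ≤ 2*C₁*((1 + 1/δ) * (Real.log x)^k) + αK * (Real.log x)^k := by
        have := mul_le_mul_of_nonneg_left hsum (le_of_lt hαK)
        have h3 := le_trans herr (by
          apply mul_le_mul_of_nonneg_left hzeta (by positivity) :
            2*C₁ * ∑ n ∈ Icc 1 N, (n:ℝ) ^ (-δ) * f n ≤ 2*C₁*((1 + 1/δ) * (Real.log x)^k))
        linarith
    _ = (2*C₁*(1+1/δ) + αK) * (Real.log x)^k := by ring
    _ ≤ (2*C₁*(1+1/δ) + αK) * (1 + Real.log x)^k := by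
        apply mul_le_mul_of_nonneg_left hpow (by positivity)

lemma sum_norm_rpow {K : Type*} [Field K] [NumberField K] {αK C₁ δ : ℝ}
    (hδ : 0 < δ) (hδ1 : δ ≤ 1) (hC₁ : 0 ≤ C₁) (hαK : 0 < αK)
    (hA : ∀ n : ℕ, 1 ≤ n → |(AIcc K n : ℝ) - αK * n| ≤ C₁ * (n:ℝ) ^ (1-δ))
    {x : ℝ} (hx : 1 ≤ x) :
    ∑ a ∈ Fx K x, ((Ideal.absNorm a : ℝ)) ^ (δ-1)
      ≤ (αK + C₁) * ((1 + 2/δ) * x ^ δ) := by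
  have hx0 : (0:ℝ) < x := by linarith
  set N := ⌊x⌋₊ with hNdef
  have hN : 1 ≤ N := Nat.le_floor (by exact_mod_cast hx)
  have hNx : (N:ℝ) ≤ x := Nat.floor_le (by linarith)
  set f : ℕ → ℝ := fun n => (n:ℝ) ^ (δ-1) with hf
  have hgroup : ∑ a ∈ Fx K x, ((Ideal.absNorm a : ℝ)) ^ (δ-1)
      = ∑ n ∈ Icc 1 N, (idl K n : ℝ) * f n := sum_Fx f (by linarith)
  have hf0 : ∀ n, 1 ≤ n → n ≤ N → 0 ≤ f n := by
    intro n h1 _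
    exact Real.rpow_nonneg (by positivity) _
  have hfa : ∀ n, 1 ≤ n → n + 1 ≤ N → f (n+1) ≤ f n := by
    intro n h1 _
    have hn0 : (0:ℝ) < (n:ℝ) := by exact_mod_cast h1
    rw [hf]
    push_cast
    exact Real.rpow_le_rpow_of_nonpos hn0 (by linarith) (by linarith)
  have hb := abel_bound hδ hδ1 hC₁ hαK hA f hN hf0 hfa
  have hps := powsum_bound hδ hδ1 hN
  have hNd : (N:ℝ) ^ δ ≤ x ^ δ :=
    Real.rpow_le_rpow (by positivity) hNx (le_of_lt hδ)
  rw [hgroup]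
  have hC : (0:ℝ) ≤ αK + C₁ := by positivity
  calc ∑ n ∈ Icc 1 N, (idl K n : ℝ) * f n ≤ (αK + C₁) * ∑ n ∈ Icc 1 N, f n := hb
    _ ≤ (αK + C₁) * ((1 + 2/δ) * (N:ℝ) ^ δ) := by
        apply mul_le_mul_of_nonneg_left hps hC
    _ ≤ (αK + C₁) * ((1 + 2/δ) * x ^ δ) := by
        apply mul_le_mul_of_nonneg_left _ hC
        apply mul_le_mul_of_nonneg_left hNd (by positivity)

lemma y_ge_one {K : Type*} [Field K] [NumberField K] {x : ℝ} {a : Ideal (𝓞 K)}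
    (ha : a ∈ Fx K x) : 1 ≤ x / (Ideal.absNorm a : ℝ) ∧ (1:ℝ) ≤ (Ideal.absNorm a : ℝ) := by
  obtain ⟨h1, h2⟩ := mem_Fx.mp ha
  have hn1 : (1:ℝ) ≤ (Ideal.absNorm a : ℝ) := norm_pos_real h1
  exact ⟨(one_le_div (by linarith)).mpr h2, hn1⟩

lemma Acard_est {K : Type*} [Field K] [NumberField K] {αK C₁ δ : ℝ}
    (hδ : 0 < δ) (hδ1 : δ ≤ 1) (hC₁ : 0 ≤ C₁) (hαK : 0 < αK)
    (hA : ∀ n : ℕ, 1 ≤ n → |(AIcc K n : ℝ) - αK * n| ≤ C₁ * (n:ℝ) ^ (1-δ))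
    {x : ℝ} (hx : 1 ≤ x) :
    |(Acard K x : ℝ) - αK * x| ≤ (C₁ + αK) * x ^ (1-δ) := by
  have hx0 : (0:ℝ) < x := by linarith
  set N := ⌊x⌋₊ with hNdef
  have hN : 1 ≤ N := Nat.le_floor (by exact_mod_cast hx)
  have hNx : (N:ℝ) ≤ x := Nat.floor_le (by linarith)
  have hxN1 : x < (N:ℝ) + 1 := Nat.lt_floor_add_one x
  rw [Acard_floor (by linarith)]
  have h1 := hA N hN
  have h2 : (N:ℝ) ^ (1-δ) ≤ x ^ (1-δ) :=
    Real.rpow_le_rpow (by positivity) hNx (by linarith)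
  have h3 : (1:ℝ) ≤ x ^ (1-δ) := Real.one_le_rpow hx (by linarith)
  have h4 : |αK * (N:ℝ) - αK * x| ≤ αK * x ^ (1-δ) := by
    rw [abs_of_nonpos (by nlinarith)]
    nlinarith
  calc |(AIcc K N : ℝ) - αK * x|
      ≤ |(AIcc K N : ℝ) - αK * N| + |αK * (N:ℝ) - αK * x| := by
        have : (AIcc K N : ℝ) - αK * x
            = ((AIcc K N : ℝ) - αK * N) + (αK * (N:ℝ) - αK * x) := by ring
        rw [this]; exact abs_add_le _ _
    _ ≤ C₁ * x ^ (1-δ) + αK * x ^ (1-δ) := by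
        have := le_trans h1 (mul_le_mul_of_nonneg_left h2 hC₁)
        linarith
    _ = (C₁ + αK) * x ^ (1-δ) := by ring

lemma sum_inv_norm_est {K : Type*} [Field K] [NumberField K] {αK C₁ δ : ℝ}
    (hδ : 0 < δ) (hδ1 : δ ≤ 1) (hC₁ : 0 ≤ C₁) (hαK : 0 < αK)
    (hA : ∀ n : ℕ, 1 ≤ n → |(AIcc K n : ℝ) - αK * n| ≤ C₁ * (n:ℝ) ^ (1-δ))
    {x : ℝ} (hx : 1 ≤ x) :
    |∑ a ∈ Fx K x, 1 / (Ideal.absNorm a : ℝ) - αK * Real.log x|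
      ≤ 2*C₁*(1+1/δ) + αK := by
  have h := Lk hδ hδ1 hC₁ hαK hA 0 hx
  have h1 : ∑ a ∈ Fx K x, (Real.log (x / (Ideal.absNorm a : ℝ)))^0 / (Ideal.absNorm a : ℝ)
      = ∑ a ∈ Fx K x, 1 / (Ideal.absNorm a : ℝ) := by
    apply Finset.sum_congr rfl; intro a _; rw [pow_zero]
  rw [h1] at h
  simpa using h

lemma T2_est {K : Type*} [Field K] [NumberField K] {αK C₁ δ : ℝ}
    (hδ : 0 < δ) (hδ1 : δ ≤ 1) (hC₁ : 0 ≤ C₁) (hαK : 0 < αK)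
    (hA : ∀ n : ℕ, 1 ≤ n → |(AIcc K n : ℝ) - αK * n| ≤ C₁ * (n:ℝ) ^ (1-δ))
    {x : ℝ} (hx : 1 ≤ x) :
    |(Tcard K 2 x : ℝ) - αK^2 * x * Real.log x|
      ≤ ((C₁+αK) * ((αK+C₁)*(1+2/δ)) + αK * (2*C₁*(1+1/δ)+αK)) * x := by
  have hx0 : (0:ℝ) < x := by linarith
  have hcast : ((Tcard K 2 x : ℕ) : ℝ)
      = ∑ a ∈ Fx K x, ((Acard K (x / (Ideal.absNorm a : ℝ)) : ℕ) : ℝ) := by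
    rw [show (2:ℕ) = 1 + 1 from rfl, Tcard_succ 1 x]
    push_cast
    apply Finset.sum_congr rfl
    intro a _
    rw [Tcard_one]
  have hdecomp : (Tcard K 2 x : ℝ) - αK^2 * x * Real.log x
      = (∑ a ∈ Fx K x, ((Acard K (x / (Ideal.absNorm a : ℝ)) : ℝ)
            - αK * (x / (Ideal.absNorm a : ℝ))))
        + αK * x * (∑ a ∈ Fx K x, 1 / (Ideal.absNorm a : ℝ) - αK * Real.log x) := by
    rw [hcast, Finset.sum_sub_distrib]
    have : ∑ a ∈ Fx K x, αK * (x / (Ideal.absNorm a : ℝ))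
        = αK * x * ∑ a ∈ Fx K x, 1 / (Ideal.absNorm a : ℝ) := by
      rw [Finset.mul_sum]
      apply Finset.sum_congr rfl
      intro a _; ring
    rw [this]
    ring
  rw [hdecomp]
  have hE1 : |∑ a ∈ Fx K x, ((Acard K (x / (Ideal.absNorm a : ℝ)) : ℝ)
        - αK * (x / (Ideal.absNorm a : ℝ)))|
      ≤ (C₁+αK) * ((αK+C₁)*(1+2/δ)) * x := by
    apply le_trans (Finset.abs_sum_le_sum_abs _ _)
    have hpt : ∀ a ∈ Fx K x, |(Acard K (x / (Ideal.absNorm a : ℝ)) : ℝ)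
          - αK * (x / (Ideal.absNorm a : ℝ))|
        ≤ (C₁+αK) * (x ^ (1-δ) * ((Ideal.absNorm a : ℝ)) ^ (δ-1)) := by
      intro a ha
      obtain ⟨hy, hn1⟩ := y_ge_one ha
      have hn0 : (0:ℝ) < (Ideal.absNorm a : ℝ) := by linarith
      have h1 := Acard_est hδ hδ1 hC₁ hαK hA hy
      have h2 : (x / (Ideal.absNorm a : ℝ)) ^ (1-δ)
          = x ^ (1-δ) * ((Ideal.absNorm a : ℝ)) ^ (δ-1) := by
        rw [Real.div_rpow (by linarith) (by linarith),
          show δ - 1 = -(1-δ) by ring, Real.rpow_neg (by linarith)]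
        rw [div_eq_mul_inv]
      rw [h2] at h1
      exact h1
    apply le_trans (Finset.sum_le_sum hpt)
    rw [← Finset.mul_sum]
    have hsum := sum_norm_rpow hδ hδ1 hC₁ hαK hA hx
    have hxd : x ^ (1-δ) * ((αK + C₁) * ((1 + 2/δ) * x ^ δ))
        = (αK+C₁)*(1+2/δ) * x := by
      have : x ^ (1-δ) * x ^ δ = x := by
        rw [← Real.rpow_add hx0]
        norm_num
      calc x ^ (1-δ) * ((αK + C₁) * ((1 + 2/δ) * x ^ δ))
          = (αK+C₁)*(1+2/δ) * (x ^ (1-δ) * x ^ δ) := by ring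
        _ = (αK+C₁)*(1+2/δ) * x := by rw [this]
    have hx1δ : (0:ℝ) ≤ x ^ (1-δ) := Real.rpow_nonneg (by linarith) _
    calc (C₁+αK) * ∑ a ∈ Fx K x, x ^ (1-δ) * ((Ideal.absNorm a : ℝ)) ^ (δ-1)
        = (C₁+αK) * (x ^ (1-δ) * ∑ a ∈ Fx K x, ((Ideal.absNorm a : ℝ)) ^ (δ-1)) := by
          rw [← Finset.mul_sum]
      _ ≤ (C₁+αK) * (x ^ (1-δ) * ((αK + C₁) * ((1 + 2/δ) * x ^ δ))) := by
          apply mul_le_mul_of_nonneg_left _ (by positivity)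
          exact mul_le_mul_of_nonneg_left hsum hx1δ
      _ = (C₁+αK) * ((αK+C₁)*(1+2/δ)) * x := by rw [hxd]; ring
  have hE2 := sum_inv_norm_est hδ hδ1 hC₁ hαK hA hx
  have htri := abs_add_le (∑ a ∈ Fx K x, ((Acard K (x / (Ideal.absNorm a : ℝ)) : ℝ)
        - αK * (x / (Ideal.absNorm a : ℝ))))
    (αK * x * (∑ a ∈ Fx K x, 1 / (Ideal.absNorm a : ℝ) - αK * Real.log x))
  apply le_trans htri
  have h3 : |αK * x * (∑ a ∈ Fx K x, 1 / (Ideal.absNorm a : ℝ) - αK * Real.log x)|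
      ≤ αK * x * (2*C₁*(1+1/δ)+αK) := by
    rw [abs_mul, abs_of_pos (by positivity : (0:ℝ) < αK * x)]
    exact mul_le_mul_of_nonneg_left hE2 (by positivity)
  nlinarith

lemma T_step {K : Type*} [Field K] [NumberField K] {αK C₁ δ : ℝ}
    (hδ : 0 < δ) (hδ1 : δ ≤ 1) (hC₁ : 0 ≤ C₁) (hαK : 0 < αK)
    (hA : ∀ n : ℕ, 1 ≤ n → |(AIcc K n : ℝ) - αK * n| ≤ C₁ * (n:ℝ) ^ (1-δ))
    (g : ℕ) (hg : 2 ≤ g) {Cg : ℝ} (hCg : 0 ≤ Cg)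
    (IH : ∀ y : ℝ, 1 ≤ y →
      |(Tcard K g y : ℝ) - αK^g * y * (Real.log y)^(g-1) / ((g-1).factorial : ℝ)|
        ≤ Cg * (y * (1 + Real.log y)^(g-2))) :
    ∀ x : ℝ, 1 ≤ x →
      |(Tcard K (g+1) x : ℝ) - αK^(g+1) * x * (Real.log x)^g / (g.factorial : ℝ)|
        ≤ (αK^g / ((g-1).factorial : ℝ) * (2*C₁*(1+1/δ)+αK)
            + Cg * (αK + (2*C₁*(1+1/δ)+αK))) * (x * (1 + Real.log x)^(g-1)) := by
  intro x hx
  have hx0 : (0:ℝ) < x := by linarith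
  have hlogx : (0:ℝ) ≤ Real.log x := Real.log_nonneg hx
  set CL0 : ℝ := 2*C₁*(1+1/δ)+αK with hCL0def
  have hCL0 : 0 < CL0 := by positivity
  have hcast : ((Tcard K (g+1) x : ℕ) : ℝ)
      = ∑ a ∈ Fx K x, ((Tcard K g (x / (Ideal.absNorm a : ℝ)) : ℕ) : ℝ) := by
    rw [Tcard_succ g x]
    push_cast
    rfl
  -- main decomposition
  have hfacpos : (0:ℝ) < ((g-1).factorial : ℝ) := by exact_mod_cast (g-1).factorial_pos
  have hgfac : (g.factorial : ℝ) = (g : ℝ) * ((g-1).factorial : ℝ) := by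
    have := Nat.mul_factorial_pred (show g ≠ 0 by omega)
    exact_mod_cast this.symm
  have hgpos : (0:ℝ) < (g:ℝ) := by exact_mod_cast (show 0 < g by omega)
  have hsucc : g - 1 + 1 = g := Nat.succ_pred_eq_of_pos (show 0 < g by omega)
  -- Lk with k = g-1
  have hLk := Lk hδ hδ1 hC₁ hαK hA (g-1) hx
  rw [hsucc] at hLk
  -- inner sum notation
  set S : ℝ := ∑ a ∈ Fx K x,
      (Real.log (x / (Ideal.absNorm a : ℝ)))^(g-1) / (Ideal.absNorm a : ℝ) with hSdef
  have hdecomp : (Tcard K (g+1) x : ℝ) - αK^(g+1) * x * (Real.log x)^g / (g.factorial : ℝ)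
      = (∑ a ∈ Fx K x, ((Tcard K g (x / (Ideal.absNorm a : ℝ)) : ℝ)
            - αK^g * (x / (Ideal.absNorm a : ℝ))
                * (Real.log (x / (Ideal.absNorm a : ℝ)))^(g-1) / ((g-1).factorial : ℝ)))
        + αK^g / ((g-1).factorial : ℝ) * x * (S - αK * ((Real.log x)^g / (g:ℝ))) := by
    rw [hcast, Finset.sum_sub_distrib, hSdef]
    have hterm : ∀ a ∈ Fx K x,
        αK^g * (x / (Ideal.absNorm a : ℝ))
            * (Real.log (x / (Ideal.absNorm a : ℝ)))^(g-1) / ((g-1).factorial : ℝ)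
          = αK^g / ((g-1).factorial : ℝ) * x
              * ((Real.log (x / (Ideal.absNorm a : ℝ)))^(g-1) / (Ideal.absNorm a : ℝ)) := by
      intro a ha
      ring
    rw [Finset.sum_congr rfl hterm, ← Finset.mul_sum]
    have hmain : αK^(g+1) * x * (Real.log x)^g / (g.factorial : ℝ)
        = αK^g / ((g-1).factorial : ℝ) * x * (αK * ((Real.log x)^g / (g:ℝ))) := by
      rw [hgfac]
      field_simp
      ring
    rw [hmain]
    ring
  rw [hdecomp]
  -- error bound for D
  have hD : |∑ a ∈ Fx K x, ((Tcard K g (x / (Ideal.absNorm a : ℝ)) : ℝ)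
        - αK^g * (x / (Ideal.absNorm a : ℝ))
            * (Real.log (x / (Ideal.absNorm a : ℝ)))^(g-1) / ((g-1).factorial : ℝ))|
      ≤ Cg * (αK + CL0) * (x * (1 + Real.log x)^(g-1)) := by
    apply le_trans (Finset.abs_sum_le_sum_abs _ _)
    have hpt : ∀ a ∈ Fx K x, |(Tcard K g (x / (Ideal.absNorm a : ℝ)) : ℝ)
          - αK^g * (x / (Ideal.absNorm a : ℝ))
              * (Real.log (x / (Ideal.absNorm a : ℝ)))^(g-1) / ((g-1).factorial : ℝ)|
        ≤ Cg * ((1 + Real.log x)^(g-2) * (x * (1/(Ideal.absNorm a : ℝ)))) := by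
      intro a ha
      obtain ⟨hy, hn1⟩ := y_ge_one ha
      have hn0 : (0:ℝ) < (Ideal.absNorm a : ℝ) := by linarith
      have h1 := IH (x / (Ideal.absNorm a : ℝ)) hy
      have hyx : x / (Ideal.absNorm a : ℝ) ≤ x := by
        rw [div_le_iff₀ hn0]
        nlinarith
      have hylog : Real.log (x / (Ideal.absNorm a : ℝ)) ≤ Real.log x :=
        Real.log_le_log (by linarith) hyx
      have hylog0 : (0:ℝ) ≤ Real.log (x / (Ideal.absNorm a : ℝ)) := Real.log_nonneg hy
      have h2 : (1 + Real.log (x / (Ideal.absNorm a : ℝ)))^(g-2)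
          ≤ (1 + Real.log x)^(g-2) :=
        pow_le_pow_left₀ (by linarith) (by linarith) _
      have h3 : x / (Ideal.absNorm a : ℝ) * (1 + Real.log (x / (Ideal.absNorm a : ℝ)))^(g-2)
          ≤ (1 + Real.log x)^(g-2) * (x * (1/(Ideal.absNorm a : ℝ))) := by
        have hy0 : (0:ℝ) < x / (Ideal.absNorm a : ℝ) := by linarith
        calc x / (Ideal.absNorm a : ℝ) * (1 + Real.log (x / (Ideal.absNorm a : ℝ)))^(g-2)
            ≤ x / (Ideal.absNorm a : ℝ) * (1 + Real.log x)^(g-2) :=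
              mul_le_mul_of_nonneg_left h2 (le_of_lt hy0)
          _ = (1 + Real.log x)^(g-2) * (x * (1/(Ideal.absNorm a : ℝ))) := by ring
      calc |(Tcard K g (x / (Ideal.absNorm a : ℝ)) : ℝ)
            - αK^g * (x / (Ideal.absNorm a : ℝ))
                * (Real.log (x / (Ideal.absNorm a : ℝ)))^(g-1) / ((g-1).factorial : ℝ)|
          ≤ Cg * (x / (Ideal.absNorm a : ℝ)
              * (1 + Real.log (x / (Ideal.absNorm a : ℝ)))^(g-2)) := h1
        _ ≤ Cg * ((1 + Real.log x)^(g-2) * (x * (1/(Ideal.absNorm a : ℝ)))) :=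
            mul_le_mul_of_nonneg_left h3 hCg
    apply le_trans (Finset.sum_le_sum hpt)
    -- sum of 1/Na
    have hinv := sum_inv_norm_est hδ hδ1 hC₁ hαK hA hx
    have hinvle : ∑ a ∈ Fx K x, 1 / (Ideal.absNorm a : ℝ) ≤ αK * Real.log x + CL0 := by
      have := (abs_le.mp hinv).2
      rw [hCL0def]
      linarith
    have hinv0 : (0:ℝ) ≤ ∑ a ∈ Fx K x, 1 / (Ideal.absNorm a : ℝ) := by
      apply Finset.sum_nonneg
      intro a ha
      have := (y_ge_one ha).2
      positivity
    have hfactor : ∑ a ∈ Fx K x, Cg * ((1 + Real.log x)^(g-2) * (x * (1/(Ideal.absNorm a : ℝ))))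
        = Cg * (1 + Real.log x)^(g-2) * x * ∑ a ∈ Fx K x, 1 / (Ideal.absNorm a : ℝ) := by
      rw [Finset.mul_sum]
      apply Finset.sum_congr rfl
      intro a _; ring
    rw [hfactor]
    have hlog1 : αK * Real.log x + CL0 ≤ (αK + CL0) * (1 + Real.log x) := by nlinarith
    have hc0 : (0:ℝ) ≤ Cg * (1 + Real.log x)^(g-2) * x := by positivity
    calc Cg * (1 + Real.log x)^(g-2) * x * ∑ a ∈ Fx K x, 1 / (Ideal.absNorm a : ℝ)
        ≤ Cg * (1 + Real.log x)^(g-2) * x * ((αK + CL0) * (1 + Real.log x)) := by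
          apply mul_le_mul_of_nonneg_left (le_trans hinvle hlog1) hc0
      _ = Cg * (αK + CL0) * (x * ((1 + Real.log x)^(g-2) * (1 + Real.log x)^1)) := by ring
      _ = Cg * (αK + CL0) * (x * (1 + Real.log x)^(g-2+1)) := by rw [pow_add]
      _ = Cg * (αK + CL0) * (x * (1 + Real.log x)^(g-1)) := by
          rw [show g-2+1 = g-1 by omega]
  -- error bound for M
  have hM : |αK^g / ((g-1).factorial : ℝ) * x * (S - αK * ((Real.log x)^g / (g:ℝ)))|
      ≤ αK^g / ((g-1).factorial : ℝ) * CL0 * (x * (1 + Real.log x)^(g-1)) := by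
    rw [abs_mul]
    have h1 : |αK^g / ((g-1).factorial : ℝ) * x| = αK^g / ((g-1).factorial : ℝ) * x := by
      apply abs_of_pos
      positivity
    rw [h1]
    have hgcast : ((g-1:ℕ):ℝ) + 1 = (g:ℝ) := by
      rw [show ((g:ℝ)) = (((g-1)+1 : ℕ):ℝ) by rw [hsucc]]
      push_cast
      ring
    have h2 : |S - αK * ((Real.log x)^g / (g:ℝ))| ≤ CL0 * (1 + Real.log x)^(g-1) := by
      rw [hCL0def, show ((g:ℝ)) = ((g-1:ℕ):ℝ) + 1 from hgcast.symm]
      exact hLk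
    calc αK^g / ((g-1).factorial : ℝ) * x * |S - αK * ((Real.log x)^g / (g:ℝ))|
        ≤ αK^g / ((g-1).factorial : ℝ) * x * (CL0 * (1 + Real.log x)^(g-1)) := by
          apply mul_le_mul_of_nonneg_left h2 (by positivity)
      _ = αK^g / ((g-1).factorial : ℝ) * CL0 * (x * (1 + Real.log x)^(g-1)) := by ring
  apply le_trans (abs_add_le _ _)
  have := add_le_add hD hM
  rw [hCL0def] at this ⊢
  linarith

lemma estimate_all {K : Type*} [Field K] [NumberField K] {αK C₁ δ : ℝ}
    (hδ : 0 < δ) (hδ1 : δ ≤ 1) (hC₁ : 0 ≤ C₁) (hαK : 0 < αK)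
    (hA : ∀ n : ℕ, 1 ≤ n → |(AIcc K n : ℝ) - αK * n| ≤ C₁ * (n:ℝ) ^ (1-δ)) :
    ∀ g : ℕ, 2 ≤ g → ∃ C : ℝ, 0 ≤ C ∧ ∀ x : ℝ, 1 ≤ x →
      |(Tcard K g x : ℝ) - αK^g * x * (Real.log x)^(g-1) / ((g-1).factorial : ℝ)|
        ≤ C * (x * (1 + Real.log x)^(g-2)) := by
  intro g hg
  induction g, hg using Nat.le_induction with
  | base =>
    refine ⟨(C₁+αK) * ((αK+C₁)*(1+2/δ)) + αK * (2*C₁*(1+1/δ)+αK), by positivity, ?_⟩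
    intro x hx
    have h := T2_est hδ hδ1 hC₁ hαK hA hx
    simpa using h
  | succ g hg ih =>
    obtain ⟨Cg, hCg, IH⟩ := ih
    refine ⟨αK^g / ((g-1).factorial : ℝ) * (2*C₁*(1+1/δ)+αK)
        + Cg * (αK + (2*C₁*(1+1/δ)+αK)), by positivity, ?_⟩
    intro x hx
    have h := T_step hδ hδ1 hC₁ hαK hA g hg hCg IH x hx
    rw [show g+1-1 = g by omega, show g+1-2 = g-1 by omega]
    exact h
end NF

end Stmt11Proof

open Stmt11Proof

/-- for `g ≥ 2`,
`Σ_{N(a) ≤ x} τ_{K,g}(a) = α_K^g x (log x)^{g-1}/(g-1)! + O_K(x (log x)^{g-2})`,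
where `α_K` is the ideal density constant (`Σ_{N(a)≤x} 1 = α_K x + O(x^{1-1/n_K})`).
The sum `Σ_{N(a) ≤ x} τ_{K,g}(a)` is encoded as the number of `g`-tuples of ideals whose
product is nonzero of norm at most `x`. -/
theorem stmt_11 {K : Type*} [Field K] [NumberField K] (αK : ℝ) (hαK : 0 < αK)
    (hα : ∃ C : ℝ, ∀ x : ℝ, 2 ≤ x →
      |(Nat.card {a : Ideal (𝓞 K) // a ≠ ⊥ ∧ (Ideal.absNorm a : ℝ) ≤ x} : ℝ) - αK * x|
        ≤ C * x ^ (1 - 1 / (Module.finrank ℚ K : ℝ)))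
    (g : ℕ) (hg : 2 ≤ g) :
    ∃ C : ℝ, ∀ x : ℝ, 2 ≤ x →
      |(Nat.card {b : Fin g → Ideal (𝓞 K) //
          ∏ i, b i ≠ ⊥ ∧ (Ideal.absNorm (∏ i, b i) : ℝ) ≤ x} : ℝ)
          - αK ^ g * x * (Real.log x) ^ (g - 1) / (g - 1).factorial|
        ≤ C * x * (Real.log x) ^ (g - 2) := by
  classical
  obtain ⟨C0, hC0⟩ := hα
  set δ : ℝ := 1 / (Module.finrank ℚ K : ℝ) with hδdef
  have hfin : 0 < Module.finrank ℚ K := Module.finrank_pos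
  have hfinR : (0:ℝ) < (Module.finrank ℚ K : ℝ) := by exact_mod_cast hfin
  have hδ : 0 < δ := by rw [hδdef]; positivity
  have hδ1 : δ ≤ 1 := by
    rw [hδdef, div_le_one hfinR]
    exact_mod_cast hfin
  set C₁ : ℝ := max C0 0 + ((AIcc K 1 : ℝ) + αK) with hC₁def
  have hAIcc0 : (0:ℝ) ≤ (AIcc K 1 : ℝ) := by positivity
  have hC₁ : 0 ≤ C₁ := by
    rw [hC₁def]
    have := le_max_right C0 (0:ℝ)
    nlinarith
  have hA : ∀ n : ℕ, 1 ≤ n → |(AIcc K n : ℝ) - αK * n| ≤ C₁ * (n:ℝ) ^ (1-δ) := by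
    intro n hn
    rcases eq_or_lt_of_le hn with h1 | h2
    · have hn1 : n = 1 := h1.symm
      subst hn1
      have hpow : ((1:ℕ):ℝ) ^ ((1:ℝ)-δ) = 1 := by rw [Nat.cast_one, Real.one_rpow]
      rw [hpow, mul_one]
      have habs : |(AIcc K 1 : ℝ) - αK * (1:ℕ)| ≤ (AIcc K 1 : ℝ) + αK := by
        rw [Nat.cast_one, mul_one]
        apply le_trans (abs_sub _ _)
        rw [abs_of_nonneg hAIcc0, abs_of_pos hαK]
      apply le_trans habs
      rw [hC₁def]
      have := le_max_right C0 (0:ℝ)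
      linarith
    · have hn2 : 2 ≤ n := h2
      have hx2 : (2:ℝ) ≤ (n:ℝ) := by exact_mod_cast hn2
      have h := hC0 (n:ℝ) hx2
      have hAc : (Nat.card {a : Ideal (𝓞 K) // a ≠ ⊥ ∧ (Ideal.absNorm a : ℝ) ≤ ((n:ℕ):ℝ)} : ℝ)
          = (AIcc K n : ℝ) := by
        have h1 : Nat.card {a : Ideal (𝓞 K) // a ≠ ⊥ ∧ (Ideal.absNorm a : ℝ) ≤ ((n:ℕ):ℝ)}
            = Acard K ((n:ℕ):ℝ) := rfl
        rw [h1, Acard_floor (by positivity), Nat.floor_natCast]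
      rw [hAc] at h
      have hC0le : C0 ≤ C₁ := by
        rw [hC₁def]
        have := le_max_left C0 (0:ℝ)
        nlinarith
      have hpow0 : (0:ℝ) ≤ (n:ℝ) ^ ((1:ℝ)-δ) := Real.rpow_nonneg (by positivity) _
      calc |(AIcc K n : ℝ) - αK * n| ≤ C0 * (n:ℝ) ^ ((1:ℝ)-δ) := h
        _ ≤ C₁ * (n:ℝ) ^ ((1:ℝ)-δ) := mul_le_mul_of_nonneg_right hC0le hpow0
  obtain ⟨C, hCpos, hest⟩ := estimate_all hδ hδ1 hC₁ hαK hA g hg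
  refine ⟨C * (1 + 1/Real.log 2)^(g-2), ?_⟩
  intro x hx
  have hx1 : (1:ℝ) ≤ x := by linarith
  have h := hest x hx1
  have hTeq : (Nat.card {b : Fin g → Ideal (𝓞 K) //
      ∏ i, b i ≠ ⊥ ∧ (Ideal.absNorm (∏ i, b i) : ℝ) ≤ x}) = Tcard K g x := rfl
  rw [hTeq]
  have hlog2 : 0 < Real.log 2 := Real.log_pos (by norm_num)
  have hlogx2 : Real.log 2 ≤ Real.log x := Real.log_le_log (by norm_num) hx
  have hlogx0 : (0:ℝ) ≤ Real.log x := by linarith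
  have hbound : (1 + Real.log x)^(g-2)
      ≤ (1 + 1/Real.log 2)^(g-2) * (Real.log x)^(g-2) := by
    rw [← mul_pow]
    apply pow_le_pow_left₀ (by linarith)
    have h1 : (1:ℝ) ≤ Real.log x / Real.log 2 := by
      rw [le_div_iff₀ hlog2]; linarith
    calc 1 + Real.log x ≤ Real.log x / Real.log 2 + Real.log x := by linarith
      _ = (1 + 1/Real.log 2) * Real.log x := by field_simp; ring
  calc |(Tcard K g x : ℝ) - αK^g * x * (Real.log x)^(g-1) / ((g-1).factorial : ℝ)|
      ≤ C * (x * (1 + Real.log x)^(g-2)) := h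
    _ ≤ C * (x * ((1 + 1/Real.log 2)^(g-2) * (Real.log x)^(g-2))) := by
        apply mul_le_mul_of_nonneg_left _ hCpos
        apply mul_le_mul_of_nonneg_left hbound (by linarith)
    _ = C * (1 + 1/Real.log 2)^(g-2) * x * (Real.log x)^(g-2) := by ring
end

section
/- Let O_K be a PID (ring of integers of a number field K) and K₁/K a quadratic extension of number fields. Then O_{K₁} is monogenic over O_K: there exists θ ∈ O_{K₁} with O_{K₁} = O_K[θ]. -/
open NumberField

/-- if `O_K` is a PID and `K₁/K` is a quadratic extension of number fields,
then `O_{K₁}` is monogenic over `O_K`: `O_{K₁} = O_K[θ]` for some `θ`. -/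
theorem stmt_17 {K K₁ : Type*} [Field K] [NumberField K] [Field K₁] [NumberField K₁]
    [Algebra K K₁] (hpid : IsPrincipalIdealRing (𝓞 K))
    (hdeg : Module.finrank K K₁ = 2) :
    ∃ θ : 𝓞 K₁, Algebra.adjoin (𝓞 K) {θ} = ⊤ := by
  haveI := hpid
  haveI hfd : FiniteDimensional K K₁ := FiniteDimensional.of_finrank_pos (by rw [hdeg]; norm_num)
  haveI : Module.IsTorsionFree (𝓞 K) K₁ := by infer_instance
  haveI : Module.Free (𝓞 K) (𝓞 K₁) := IsIntegralClosure.module_free (𝓞 K) K K₁ (𝓞 K₁)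
  have hrank : Module.finrank (𝓞 K) (𝓞 K₁) = 2 :=
    (IsIntegralClosure.rank (𝓞 K) K K₁ (𝓞 K₁)).trans hdeg
  haveI : Module.Finite (𝓞 K) (𝓞 K₁) := Module.IsNoetherian.finite _ _
  let b : Module.Basis (Fin 2) (𝓞 K) (𝓞 K₁) := Module.finBasisOfFinrankEq _ _ hrank
  obtain ⟨a0, a1, h1⟩ : ∃ a0 a1 : 𝓞 K, a0 • b 0 + a1 • b 1 = 1 :=
    ⟨b.repr 1 0, b.repr 1 1, by
      have := b.sum_repr 1
      rwa [Fin.sum_univ_two] at this⟩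
  -- the ideal (a0, a1) is principal, generated by g
  obtain ⟨g, hg⟩ := (hpid.principal (Ideal.span {a0, a1})).principal
  have hga0 : g ∣ a0 := Ideal.mem_span_singleton.mp
    (show a0 ∈ Submodule.span (𝓞 K) {g} from hg ▸ Ideal.subset_span (by simp))
  have hga1 : g ∣ a1 := Ideal.mem_span_singleton.mp
    (show a1 ∈ Submodule.span (𝓞 K) {g} from hg ▸ Ideal.subset_span (by simp))
  obtain ⟨a0', rfl⟩ := hga0
  obtain ⟨a1', rfl⟩ := hga1
  -- g is a unit in 𝓞 K₁ since g * z = 1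
  have hz : algebraMap (𝓞 K) (𝓞 K₁) g * (a0' • b 0 + a1' • b 1) = 1 := by
    rw [← Algebra.smul_def, ← h1]
    module
  have hug₁ : IsUnit (algebraMap (𝓞 K) (𝓞 K₁) g) := IsUnit.of_mul_eq_one _ hz
  -- hence g is a unit in 𝓞 K via the norm
  have hug : IsUnit g := by
    have hn := hug₁.map (RingOfIntegers.norm K)
    rwa [RingOfIntegers.norm_algebraMap, hdeg, isUnit_pow_iff (two_ne_zero)] at hn
  -- so (a0, a1) = (1): get u, v with u*a0 + v*a1 = 1
  have hsp : Ideal.span {g * a0', g * a1'} = ⊤ :=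
    hg.trans (Ideal.span_singleton_eq_top.mpr hug)
  have h1mem : (1 : 𝓞 K) ∈ Ideal.span ({g * a0', g * a1'} : Set (𝓞 K)) := hsp ▸ trivial
  obtain ⟨u, v, huv⟩ := Ideal.mem_span_pair.mp h1mem
  set A0 := g * a0'
  set A1 := g * a1'
  refine ⟨(-v) • b 0 + u • b 1, ?_⟩
  set θ := (-v) • b 0 + u • b 1 with hθ
  have hθmem : θ ∈ Algebra.adjoin (𝓞 K) {θ} := Algebra.self_mem_adjoin_singleton _ _
  have hb0 : b 0 = u • (1 : 𝓞 K₁) - A1 • θ := by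
    rw [← h1, hθ]
    have : (u * A0 + v * A1) • b 0 =
        u • (A0 • b 0 + A1 • b 1) - A1 • ((-v) • b 0 + u • b 1) := by module
    rw [huv, one_smul] at this
    exact this
  have hb1 : b 1 = v • (1 : 𝓞 K₁) + A0 • θ := by
    rw [← h1, hθ]
    have : (u * A0 + v * A1) • b 1 =
        v • (A0 • b 0 + A1 • b 1) + A0 • ((-v) • b 0 + u • b 1) := by module
    rw [huv, one_smul] at this
    exact this
  have hb0mem : b 0 ∈ Algebra.adjoin (𝓞 K) {θ} := by
    rw [hb0]
    exact sub_mem (Subalgebra.smul_mem _ (one_mem _) u) (Subalgebra.smul_mem _ hθmem A1)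
  have hb1mem : b 1 ∈ Algebra.adjoin (𝓞 K) {θ} := by
    rw [hb1]
    exact add_mem (Subalgebra.smul_mem _ (one_mem _) v) (Subalgebra.smul_mem _ hθmem A0)
  rw [eq_top_iff]
  intro x _
  have hx : x ∈ Submodule.span (𝓞 K) (Set.range b) := by rw [b.span_eq]; trivial
  refine Submodule.span_induction ?_ ?_ ?_ ?_ hx
  · rintro y ⟨i, rfl⟩
    fin_cases i
    exacts [hb0mem, hb1mem]
  · exact zero_mem _
  · exact fun y z _ _ hy hz => add_mem hy hz
  · exact fun c y _ hy => Subalgebra.smul_mem _ hy c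
end
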